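/- arXiv:2404.09007 — 5 statements merged into one kernel-verified Lean document; each statement's English description precedes it below -/
import Mathlib

section
/- Let ε₁ ∈ [0,1]. Suppose there exist bounded Borel measurable functions v, w : 𝒳̂ → ℝ such that: v(x) ≥ ε₁ for all x ∈ 𝒳₀; v(x) ≤ 𝔼^∞[v(φ_π^{x}(1))] for all x ∈ 𝒳 ∖ 𝒳_r; v(x) ≤ 𝔼^∞[w(φ_π^{x}(1))] − w(x) for all x ∈ 𝒳 ∖ 𝒳_r; v(x) ≤ 1 for all x ∈ 𝒳_r; and v(x) ≤ 0 for all x ∈ 𝒳̂ ∖ 𝒳. Then for every x₀ ∈ 𝒳₀, ℙ^∞(∃k ∈ ℕ: φ_π^{x₀}(k) ∈ 𝒳_r and ∀l ∈ ℕ with l ≤ k: φ_π^{x₀}(l) ∈ 𝒳) ≥ ε₁. -/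
/-!
Let `T` be the one-step transition operator of the system stopped outside `X \ Xr`. The
hypotheses say `v ≤ T v` and `v ≤ 𝟙_Xr + (T w - w)`, and `Tˡ 𝟙_Xr` increases with `l`, so the
positive linear operators `Tˡ` give, after summing over `l < k` and telescoping,
`k v(x₀) ≤ k Tᵏ 𝟙_Xr(x₀) + Tᵏ w(x₀) - w(x₀) ≤ k Tᵏ 𝟙_Xr(x₀) + 2 sup |w|`.
The reach-avoid probability `p` satisfies `𝟙_Xr ≤ p` and, by conditioning on the first
disturbance, `T p ≤ p`; hence `Tᵏ 𝟙_Xr ≤ p`, and `k (v(x₀) - p(x₀))` stays bounded in `k`.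
-/

open MeasureTheory Filter Topology

noncomputable section

/-- Trajectory of the discrete-time system `x(l+1) = f(x(l), d(l))` under the
disturbance sequence `π`, starting from `x0`. -/
def traj {n m : ℕ} (f : (Fin n → ℝ) → (Fin m → ℝ) → (Fin n → ℝ))
    (x0 : Fin n → ℝ) (π : ℕ → Fin m → ℝ) : ℕ → Fin n → ℝ
  | 0 => x0
  | k + 1 => f (traj f x0 π k) (π k)

open ProbabilityTheory

lemma nonpos_of_forall_nat_mul_le {a C : ℝ} (h : ∀ k : ℕ, (k : ℝ) * a ≤ C) : a ≤ 0 := by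
  by_contra! ha
  obtain ⟨k, hk⟩ := exists_nat_gt (C / a)
  rw [div_lt_iff₀ ha] at hk
  linarith [h k]

section BoundedMeasurable

variable {α : Type*} [MeasurableSpace α] {g h : α → ℝ}

def IsBoundedMeasurable (g : α → ℝ) : Prop :=
  Measurable g ∧ ∃ C, ∀ x, |g x| ≤ C

namespace IsBoundedMeasurable

lemma add (hg : IsBoundedMeasurable g) (hh : IsBoundedMeasurable h) :
    IsBoundedMeasurable (g + h) := by
  obtain ⟨hgm, C, hC⟩ := hg
  obtain ⟨hhm, C', hC'⟩ := hh
  exact ⟨hgm.add hhm, C + C', fun x => (abs_add_le _ _).trans (add_le_add (hC x) (hC' x))⟩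

lemma sub (hg : IsBoundedMeasurable g) (hh : IsBoundedMeasurable h) :
    IsBoundedMeasurable (g - h) := by
  obtain ⟨hgm, C, hC⟩ := hg
  obtain ⟨hhm, C', hC'⟩ := hh
  exact ⟨hgm.sub hhm, C + C', fun x => (abs_sub _ _).trans (add_le_add (hC x) (hC' x))⟩

lemma indicator {s : Set α} (hs : MeasurableSet s) (hg : Measurable g)
    (hC : ∃ C, ∀ x ∈ s, |g x| ≤ C) : IsBoundedMeasurable (s.indicator g) := by
  obtain ⟨C, hC⟩ := hC
  refine ⟨hg.indicator hs, max C 0, fun x => ?_⟩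
  by_cases hx : x ∈ s
  · rw [Set.indicator_of_mem hx]
    exact (hC x hx).trans (le_max_left _ _)
  · rw [Set.indicator_of_notMem hx, abs_zero]
    exact le_max_right _ _

lemma indicator_one {s : Set α} (hs : MeasurableSet s) :
    IsBoundedMeasurable (s.indicator (1 : α → ℝ)) :=
  .indicator hs measurable_const ⟨1, fun _ _ => by simp⟩

end IsBoundedMeasurable

end BoundedMeasurable

section StoppedTransition

variable {α Δ : Type*} [MeasurableSpace Δ]

open Classical in
def stoppedTransition (f : α → Δ → α) (μ : Measure Δ) (A : Set α) (g : α → ℝ) (x : α) : ℝ :=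
  if x ∈ A then ∫ d, g (f x d) ∂μ else g x

variable {f : α → Δ → α} {μ : Measure Δ} {A : Set α} {g h : α → ℝ}

lemma stoppedTransition_of_mem {x : α} (hx : x ∈ A) :
    stoppedTransition f μ A g x = ∫ d, g (f x d) ∂μ :=
  if_pos hx

lemma stoppedTransition_of_notMem {x : α} (hx : x ∉ A) : stoppedTransition f μ A g x = g x :=
  if_neg hx

lemma le_stoppedTransition (h : ∀ x ∈ A, g x ≤ ∫ d, g (f x d) ∂μ) :
    g ≤ stoppedTransition f μ A g := by
  intro x
  by_cases hx : x ∈ A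
  · rw [stoppedTransition_of_mem hx]
    exact h x hx
  · rw [stoppedTransition_of_notMem hx]

lemma stoppedTransition_le (h : ∀ x ∈ A, ∫ d, g (f x d) ∂μ ≤ g x) :
    stoppedTransition f μ A g ≤ g := by
  intro x
  by_cases hx : x ∈ A
  · rw [stoppedTransition_of_mem hx]
    exact h x hx
  · rw [stoppedTransition_of_notMem hx]

variable [IsProbabilityMeasure μ]

lemma abs_stoppedTransition_le {C : ℝ} (hC : ∀ x, |g x| ≤ C) (x : α) :
    |stoppedTransition f μ A g x| ≤ C := by
  by_cases hx : x ∈ A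
  · rw [stoppedTransition_of_mem hx]
    simpa using norm_integral_le_of_norm_le_const (μ := μ) (f := fun d => g (f x d))
      (Eventually.of_forall fun d => (Real.norm_eq_abs _).trans_le (hC (f x d)))
  · rw [stoppedTransition_of_notMem hx]
    exact hC x

lemma abs_iterate_stoppedTransition_le {C : ℝ} (hC : ∀ x, |g x| ≤ C) (k : ℕ) (x : α) :
    |(stoppedTransition f μ A)^[k] g x| ≤ C := by
  induction k generalizing x with
  | zero => exact hC x
  | succ k ih =>
    rw [Function.iterate_succ_apply']
    exact abs_stoppedTransition_le ih x

variable [MeasurableSpace α]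

lemma IsBoundedMeasurable.integrable_comp (hf : Measurable (Function.uncurry f))
    (hg : IsBoundedMeasurable g) (x : α) : Integrable (fun d => g (f x d)) μ := by
  obtain ⟨hgm, C, hC⟩ := hg
  exact Integrable.of_bound (hgm.comp (hf.comp measurable_prodMk_left)).aestronglyMeasurable C
    (Eventually.of_forall fun d => hC (f x d))

lemma isBoundedMeasurable_stoppedTransition (hf : Measurable (Function.uncurry f))
    (hA : MeasurableSet A) (hg : IsBoundedMeasurable g) :
    IsBoundedMeasurable (stoppedTransition f μ A g) := by
  obtain ⟨hgm, C, hC⟩ := hg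
  refine ⟨Measurable.ite hA ?_ hgm, C, abs_stoppedTransition_le hC⟩
  exact (hgm.comp hf).stronglyMeasurable.integral_prod_right'.measurable

lemma isBoundedMeasurable_iterate_stoppedTransition (hf : Measurable (Function.uncurry f))
    (hA : MeasurableSet A) (hg : IsBoundedMeasurable g) (k : ℕ) :
    IsBoundedMeasurable ((stoppedTransition f μ A)^[k] g) := by
  induction k with
  | zero => exact hg
  | succ k ih =>
    rw [Function.iterate_succ_apply']
    exact isBoundedMeasurable_stoppedTransition hf hA ih

lemma stoppedTransition_mono (hf : Measurable (Function.uncurry f))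
    (hg : IsBoundedMeasurable g) (hh : IsBoundedMeasurable h) (hgh : g ≤ h) :
    stoppedTransition f μ A g ≤ stoppedTransition f μ A h := by
  intro x
  by_cases hx : x ∈ A
  · rw [stoppedTransition_of_mem hx, stoppedTransition_of_mem hx]
    exact integral_mono (hg.integrable_comp hf x) (hh.integrable_comp hf x)
      fun d => hgh (f x d)
  · rw [stoppedTransition_of_notMem hx, stoppedTransition_of_notMem hx]
    exact hgh x

lemma stoppedTransition_add (hf : Measurable (Function.uncurry f))
    (hg : IsBoundedMeasurable g) (hh : IsBoundedMeasurable h) :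
    stoppedTransition f μ A (g + h) = stoppedTransition f μ A g + stoppedTransition f μ A h := by
  ext x
  by_cases hx : x ∈ A
  · simp only [Pi.add_apply, stoppedTransition_of_mem hx]
    exact integral_add (hg.integrable_comp hf x) (hh.integrable_comp hf x)
  · simp only [Pi.add_apply, stoppedTransition_of_notMem hx]

lemma iterate_stoppedTransition_mono (hf : Measurable (Function.uncurry f))
    (hA : MeasurableSet A) (hg : IsBoundedMeasurable g) (hh : IsBoundedMeasurable h)
    (hgh : g ≤ h) (k : ℕ) :
    (stoppedTransition f μ A)^[k] g ≤ (stoppedTransition f μ A)^[k] h := by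
  induction k with
  | zero => exact hgh
  | succ k ih =>
    rw [Function.iterate_succ_apply', Function.iterate_succ_apply']
    exact stoppedTransition_mono hf (isBoundedMeasurable_iterate_stoppedTransition hf hA hg k)
      (isBoundedMeasurable_iterate_stoppedTransition hf hA hh k) ih

lemma iterate_stoppedTransition_add (hf : Measurable (Function.uncurry f))
    (hA : MeasurableSet A) (hg : IsBoundedMeasurable g) (hh : IsBoundedMeasurable h) (k : ℕ) :
    (stoppedTransition f μ A)^[k] (g + h) =
      (stoppedTransition f μ A)^[k] g + (stoppedTransition f μ A)^[k] h := by
  induction k with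
  | zero => rfl
  | succ k ih =>
    rw [Function.iterate_succ_apply', Function.iterate_succ_apply',
      Function.iterate_succ_apply', ih]
    exact stoppedTransition_add hf (isBoundedMeasurable_iterate_stoppedTransition hf hA hg k)
      (isBoundedMeasurable_iterate_stoppedTransition hf hA hh k)

lemma iterate_stoppedTransition_sub (hf : Measurable (Function.uncurry f))
    (hA : MeasurableSet A) (hg : IsBoundedMeasurable g) (hh : IsBoundedMeasurable h) (k : ℕ) :
    (stoppedTransition f μ A)^[k] (g - h) =
      (stoppedTransition f μ A)^[k] g - (stoppedTransition f μ A)^[k] h := by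
  rw [eq_sub_iff_add_eq, ← iterate_stoppedTransition_add hf hA (hg.sub hh) hh, sub_add_cancel]

lemma monotone_iterate_stoppedTransition (hf : Measurable (Function.uncurry f))
    (hA : MeasurableSet A) (hg : IsBoundedMeasurable g) (h : g ≤ stoppedTransition f μ A g) :
    Monotone fun k => (stoppedTransition f μ A)^[k] g := by
  refine monotone_nat_of_le_succ fun k => ?_
  rw [Function.iterate_succ_apply]
  exact iterate_stoppedTransition_mono hf hA hg (isBoundedMeasurable_stoppedTransition hf hA hg)
    h k

lemma iterate_stoppedTransition_le (hf : Measurable (Function.uncurry f))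
    (hA : MeasurableSet A) (hg : IsBoundedMeasurable g) (hh : IsBoundedMeasurable h)
    (hgh : g ≤ h) (hTh : stoppedTransition f μ A h ≤ h) (k : ℕ) :
    (stoppedTransition f μ A)^[k] g ≤ h := by
  induction k with
  | zero => exact hgh
  | succ k ih =>
    rw [Function.iterate_succ_apply']
    exact (stoppedTransition_mono hf
      (isBoundedMeasurable_iterate_stoppedTransition hf hA hg k) hh ih).trans hTh

end StoppedTransition

section Certificate

variable {α Δ : Type*} [MeasurableSpace Δ] {f : α → Δ → α} {μ : Measure Δ} {X Xr : Set α}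
  {V W : α → ℝ}

lemma le_indicator_add_stoppedTransition_sub
    (hVW : ∀ x ∈ X \ Xr, V x ≤ (∫ d, W (f x d) ∂μ) - W x) (hVr : ∀ x ∈ Xr, V x ≤ 1)
    (hVX : ∀ x ∉ X, V x ≤ 0) :
    V ≤ Xr.indicator 1 + (stoppedTransition f μ (X \ Xr) W - W) := by
  intro x
  by_cases hx : x ∈ X \ Xr
  · simpa [stoppedTransition_of_mem hx, hx.2] using hVW x hx
  · rw [Pi.add_apply, Pi.sub_apply, stoppedTransition_of_notMem hx, sub_self, add_zero]
    by_cases hxr : x ∈ Xr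
    · simpa [hxr] using hVr x hxr
    · simpa [hxr] using hVX x fun hxX => hx ⟨hxX, hxr⟩

variable [MeasurableSpace α] [IsProbabilityMeasure μ]

theorem nat_mul_le_iterate_stoppedTransition (hf : Measurable (Function.uncurry f))
    (hX : MeasurableSet X) (hXr : MeasurableSet Xr)
    (hV : IsBoundedMeasurable V) (hW : IsBoundedMeasurable W)
    (hVT : ∀ x ∈ X \ Xr, V x ≤ ∫ d, V (f x d) ∂μ)
    (hVW : ∀ x ∈ X \ Xr, V x ≤ (∫ d, W (f x d) ∂μ) - W x) (hVr : ∀ x ∈ Xr, V x ≤ 1)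
    (hVX : ∀ x ∉ X, V x ≤ 0) (k : ℕ) (x : α) :
    k * V x ≤ k * (stoppedTransition f μ (X \ Xr))^[k] (Xr.indicator 1) x +
      ((stoppedTransition f μ (X \ Xr))^[k] W x - W x) := by
  set T := stoppedTransition f μ (X \ Xr)
  have hA : MeasurableSet (X \ Xr) := hX.diff hXr
  have hχ := IsBoundedMeasurable.indicator_one hXr
  have hTW : IsBoundedMeasurable (T W) := isBoundedMeasurable_stoppedTransition hf hA hW
  have hmonoV := monotone_iterate_stoppedTransition hf hA hV (le_stoppedTransition hVT)
  have hmonoχ : Monotone fun l => T^[l] (Xr.indicator 1) :=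
    monotone_iterate_stoppedTransition hf hA hχ <| le_stoppedTransition fun x hx => by
      rw [Set.indicator_of_notMem hx.2]
      exact integral_nonneg fun d => Set.indicator_nonneg (fun _ _ => zero_le_one) _
  have hstep : ∀ l, T^[l] V x ≤ T^[l] (Xr.indicator 1) x + (T^[l + 1] W x - T^[l] W x) := by
    intro l
    have := iterate_stoppedTransition_mono (μ := μ) hf hA hV (hχ.add (hTW.sub hW))
      (le_indicator_add_stoppedTransition_sub hVW hVr hVX) l x
    rwa [iterate_stoppedTransition_add hf hA hχ (hTW.sub hW),
      iterate_stoppedTransition_sub hf hA hTW hW, ← Function.iterate_succ_apply] at this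
  calc (k : ℝ) * V x = ∑ l ∈ Finset.range k, V x := by simp
    _ ≤ ∑ l ∈ Finset.range k, T^[l] V x :=
      Finset.sum_le_sum fun l _ => hmonoV (Nat.zero_le l) x
    _ ≤ ∑ l ∈ Finset.range k, (T^[k] (Xr.indicator 1) x + (T^[l + 1] W x - T^[l] W x)) :=
      Finset.sum_le_sum fun l hl => (hstep l).trans <| by
        gcongr
        exact hmonoχ (Finset.mem_range.1 hl).le x
    _ = k * T^[k] (Xr.indicator 1) x + (T^[k] W x - W x) := by
      rw [Finset.sum_add_distrib, Finset.sum_range_sub fun l => T^[l] W x]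
      simp

theorem le_of_indicator_le_of_stoppedTransition_le (hf : Measurable (Function.uncurry f))
    (hX : MeasurableSet X) (hXr : MeasurableSet Xr)
    (hV : IsBoundedMeasurable V) (hW : IsBoundedMeasurable W)
    (hVT : ∀ x ∈ X \ Xr, V x ≤ ∫ d, V (f x d) ∂μ)
    (hVW : ∀ x ∈ X \ Xr, V x ≤ (∫ d, W (f x d) ∂μ) - W x) (hVr : ∀ x ∈ Xr, V x ≤ 1)
    (hVX : ∀ x ∉ X, V x ≤ 0) {p : α → ℝ} (hp : IsBoundedMeasurable p)
    (hχp : Xr.indicator 1 ≤ p) (hpT : stoppedTransition f μ (X \ Xr) p ≤ p) :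
    V ≤ p := by
  intro x
  obtain ⟨C, hC⟩ := hW.2
  refine sub_nonpos.1 (nonpos_of_forall_nat_mul_le (C := 2 * C) fun k => ?_)
  have hχ := IsBoundedMeasurable.indicator_one hXr
  have hTχ := iterate_stoppedTransition_le hf (hX.diff hXr) hχ hp hχp hpT k x
  have hkχ := mul_le_mul_of_nonneg_left hTχ k.cast_nonneg
  have hWk := abs_le.1 (abs_iterate_stoppedTransition_le (μ := μ) (f := f) (A := X \ Xr) hC k x)
  have hW0 := abs_le.1 (hC x)
  linarith [nat_mul_le_iterate_stoppedTransition hf hX hXr hV hW hVT hVW hVr hVX k x]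

end Certificate

section HeadTail

variable {Δ : Type*} [MeasurableSpace Δ] (μ : Measure Δ) [IsProbabilityMeasure μ]

lemma indepFun_head_tail_infinitePi :
    IndepFun (fun π : ℕ → Δ => π 0) (fun π i => π (i + 1)) (Measure.infinitePi fun _ => μ) := by
  have hind := indep_iSup_of_disjoint (fun i => (measurable_pi_apply i).comap_le)
    ((iIndepFun_iff_iIndep _ _ _).1 (iIndepFun_infinitePi (P := fun _ : ℕ => μ)
      (X := fun _ => id) fun _ => measurable_id))
    (S := {0}) (T := Set.range Nat.succ) (by simp)
  rw [IndepFun_iff_Indep]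
  refine indep_of_indep_of_le_right (indep_of_indep_of_le_left hind ?_) ?_
  · exact le_iSup₂_of_le 0 rfl le_rfl
  · refine Measurable.comap_le (@measurable_pi_lambda _ _ _ (_) _ _ fun i => ?_)
    exact (comap_measurable _).mono (le_iSup₂_of_le (i + 1) ⟨i, rfl⟩ le_rfl) le_rfl

lemma map_head_tail_infinitePi :
    (Measure.infinitePi fun _ => μ).map (fun π : ℕ → Δ => (π 0, fun i => π (i + 1))) =
      μ.prod (Measure.infinitePi fun _ => μ) := by
  rw [(indepFun_head_tail_infinitePi μ).map_prod_eq_prod_map_map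
    (measurable_pi_apply 0).aemeasurable
    (measurable_pi_lambda _ fun i => measurable_pi_apply (i + 1)).aemeasurable,
    Measure.infinitePi_map_eval, Measure.map_infinitePi_infinitePi_of_inj (add_left_injective 1)]

end HeadTail

section ReachAvoid

variable {n m : ℕ} {f : (Fin n → ℝ) → (Fin m → ℝ) → (Fin n → ℝ)} {X Xr : Set (Fin n → ℝ)}

lemma traj_succ_eq_traj_tail (x : Fin n → ℝ) (π : ℕ → Fin m → ℝ) (k : ℕ) :
    traj f x π (k + 1) = traj f (f x (π 0)) (fun i => π (i + 1)) k := by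
  induction k with
  | zero => rfl
  | succ k ih => exact congrArg (f · (π (k + 1))) ih

lemma measurable_traj (hf : Measurable (Function.uncurry f)) (k : ℕ) :
    Measurable fun q : (Fin n → ℝ) × (ℕ → Fin m → ℝ) => traj f q.1 q.2 k := by
  induction k with
  | zero => exact measurable_fst
  | succ k ih => exact hf.comp (ih.prodMk ((measurable_pi_apply k).comp measurable_snd))

variable (f X Xr) in
def reachAvoidEvent (x : Fin n → ℝ) : Set (ℕ → Fin m → ℝ) :=
  {π | ∃ k, traj f x π k ∈ Xr ∧ ∀ l ≤ k, traj f x π l ∈ X}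

lemma measurableSet_reachAvoidEvent (hf : Measurable (Function.uncurry f))
    (hX : MeasurableSet X) (hXr : MeasurableSet Xr) :
    MeasurableSet {q : (Fin n → ℝ) × (ℕ → Fin m → ℝ) | q.2 ∈ reachAvoidEvent f X Xr q.1} := by
  convert MeasurableSet.iUnion fun k => (measurable_traj hf k hXr).inter
    (.iInter fun l => .iInter fun (_ : l ≤ k) => measurable_traj hf l hX) using 1
  ext q
  simp [reachAvoidEvent]

lemma mem_reachAvoidEvent_of_mem (hXrX : Xr ⊆ X) {x : Fin n → ℝ} (hx : x ∈ Xr)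
    (π : ℕ → Fin m → ℝ) : π ∈ reachAvoidEvent f X Xr x :=
  ⟨0, hx, fun l hl => by rw [Nat.le_zero.1 hl]; exact hXrX hx⟩

lemma mem_reachAvoidEvent_of_tail {x : Fin n → ℝ} (hx : x ∈ X) {π : ℕ → Fin m → ℝ}
    (h : (fun i => π (i + 1)) ∈ reachAvoidEvent f X Xr (f x (π 0))) :
    π ∈ reachAvoidEvent f X Xr x := by
  obtain ⟨k, hk, hsafe⟩ := h
  refine ⟨k + 1, by rwa [traj_succ_eq_traj_tail], fun l hl => ?_⟩
  cases l with
  | zero => exact hx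
  | succ l => rw [traj_succ_eq_traj_tail]; exact hsafe l (by omega)

variable (f X Xr) in
def reachAvoidProb (μ : Measure (Fin m → ℝ)) (x : Fin n → ℝ) : ℝ :=
  (Measure.infinitePi (fun _ : ℕ => μ) (reachAvoidEvent f X Xr x)).toReal

variable {μ : Measure (Fin m → ℝ)} [IsProbabilityMeasure μ]

lemma isBoundedMeasurable_reachAvoidProb (hf : Measurable (Function.uncurry f))
    (hX : MeasurableSet X) (hXr : MeasurableSet Xr) :
    IsBoundedMeasurable (reachAvoidProb f X Xr μ) := by
  refine ⟨(measurable_measure_prodMk_left (measurableSet_reachAvoidEvent hf hX hXr)).ennreal_toReal,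
    1, fun x => ?_⟩
  rw [reachAvoidProb, abs_of_nonneg ENNReal.toReal_nonneg]
  exact ENNReal.toReal_le_of_le_ofReal zero_le_one (by simpa using prob_le_one)

lemma indicator_le_reachAvoidProb (hXrX : Xr ⊆ X) : Xr.indicator 1 ≤ reachAvoidProb f X Xr μ := by
  intro x
  by_cases hx : x ∈ Xr
  · rw [Set.indicator_of_mem hx, reachAvoidProb,
      Set.eq_univ_of_forall (mem_reachAvoidEvent_of_mem hXrX hx), measure_univ]
    rfl
  · rw [Set.indicator_of_notMem hx]
    exact ENNReal.toReal_nonneg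

lemma integral_reachAvoidProb_le (hf : Measurable (Function.uncurry f))
    (hX : MeasurableSet X) (hXr : MeasurableSet Xr) {x : Fin n → ℝ} (hx : x ∈ X) :
    ∫ d, reachAvoidProb f X Xr μ (f x d) ∂μ ≤ reachAvoidProb f X Xr μ x := by
  set P := Measure.infinitePi fun _ : ℕ => μ
  set S := {q : (Fin m → ℝ) × (ℕ → Fin m → ℝ) | q.2 ∈ reachAvoidEvent f X Xr (f x q.1)}
  have hS : MeasurableSet S := measurableSet_reachAvoidEvent hf hX hXr
    |>.preimage ((hf.comp measurable_prodMk_left).prodMap measurable_id)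
  have hmeas : Measurable fun q : ℕ → Fin m → ℝ => (q 0, fun i => q (i + 1)) :=
    (measurable_pi_apply 0).prodMk (measurable_pi_lambda _ fun i => measurable_pi_apply (i + 1))
  calc ∫ d, reachAvoidProb f X Xr μ (f x d) ∂μ = ((μ.prod P) S).toReal := by
        rw [Measure.prod_apply hS, ← integral_toReal]
        · rfl
        · exact (measurable_measure_prodMk_left hS).aemeasurable
        · exact Eventually.of_forall fun _ => measure_lt_top _ _
    _ = (P ((fun q => (q 0, fun i => q (i + 1))) ⁻¹' S)).toReal := by
        rw [← map_head_tail_infinitePi, Measure.map_apply hmeas hS]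
    _ ≤ reachAvoidProb f X Xr μ x :=
        ENNReal.toReal_mono (measure_ne_top _ _)
          (measure_mono fun π hπ => mem_reachAvoidEvent_of_tail hx hπ)

theorem le_reachAvoidProb (hf : Measurable (Function.uncurry f))
    (hX : MeasurableSet X) (hXr : MeasurableSet Xr) (hXrX : Xr ⊆ X) {V W : (Fin n → ℝ) → ℝ}
    (hV : IsBoundedMeasurable V) (hW : IsBoundedMeasurable W)
    (hVT : ∀ x ∈ X \ Xr, V x ≤ ∫ d, V (f x d) ∂μ)
    (hVW : ∀ x ∈ X \ Xr, V x ≤ (∫ d, W (f x d) ∂μ) - W x) (hVr : ∀ x ∈ Xr, V x ≤ 1)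
    (hVX : ∀ x ∉ X, V x ≤ 0) :
    V ≤ reachAvoidProb f X Xr μ :=
  le_of_indicator_le_of_stoppedTransition_le hf hX hXr hV hW hVT hVW hVr hVX
    (isBoundedMeasurable_reachAvoidProb hf hX hXr) (indicator_le_reachAvoidProb hXrX)
    (stoppedTransition_le fun _ hx => integral_reachAvoidProb_le hf hX hXr hx.1)

end ReachAvoid

theorem statement_1_general {n m : ℕ}
    (f : (Fin n → ℝ) → (Fin m → ℝ) → (Fin n → ℝ))
    (hf : Measurable fun p : (Fin n → ℝ) × (Fin m → ℝ) => f p.1 p.2)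
    (D : Set (Fin m → ℝ)) (hD : MeasurableSet D)
    (μ : Measure (Fin m → ℝ)) [IsProbabilityMeasure μ] (hμD : μ D = 1)
    (Pinf : Measure (ℕ → Fin m → ℝ))
    (hPinf : ∀ (s : Finset ℕ) (B : ℕ → Set (Fin m → ℝ)), (∀ i, MeasurableSet (B i)) →
      Pinf {π : ℕ → Fin m → ℝ | ∀ i ∈ s, π i ∈ B i} = ∏ i ∈ s, μ (B i))
    (X Xr X0 Xhat : Set (Fin n → ℝ))
    (hX : MeasurableSet X) (hXr : MeasurableSet Xr)
    (hXhat : MeasurableSet Xhat)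
    (hXrX : Xr ⊆ X) (hX0X : X0 ⊆ X) (hXXhat : X ⊆ Xhat)
    (hreach : ∀ x ∈ X, ∀ d ∈ D, f x d ∈ Xhat)
    (ε₁ : ℝ)
    (v w : (Fin n → ℝ) → ℝ) (hv : Measurable v) (hw : Measurable w)
    (hvb : ∃ C, ∀ x ∈ Xhat, |v x| ≤ C) (hwb : ∃ C, ∀ x ∈ Xhat, |w x| ≤ C)
    (h1 : ∀ x ∈ X0, ε₁ ≤ v x)
    (h2 : ∀ x ∈ X \ Xr, v x ≤ ∫ d in D, v (f x d) ∂μ)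
    (h3 : ∀ x ∈ X \ Xr, v x ≤ (∫ d in D, w (f x d) ∂μ) - w x)
    (h4 : ∀ x ∈ Xr, v x ≤ 1)
    (h5 : ∀ x ∈ Xhat \ X, v x ≤ 0) :
    ∀ x0 ∈ X0,
      ε₁ ≤ (Pinf {π : ℕ → Fin m → ℝ |
        ∃ k : ℕ, traj f x0 π k ∈ Xr ∧ ∀ l ≤ k, traj f x0 π l ∈ X}).toReal := by
  intro x0 hx0
  have hDae : ∀ᵐ d ∂μ, d ∈ D :=
    (ae_iff_measure_eq hD.nullMeasurableSet).2 (by rw [measure_univ]; exact hμD)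
  rw [Measure.restrict_eq_self_of_ae_mem hDae] at h2 h3
  have hind (g : (Fin n → ℝ) → ℝ) {x} (hx : x ∈ X) :
      Xhat.indicator g x = g x ∧ ∫ d, Xhat.indicator g (f x d) ∂μ = ∫ d, g (f x d) ∂μ :=
    ⟨Set.indicator_of_mem (hXXhat hx) g,
      integral_congr_ae (hDae.mono fun d hd => Set.indicator_of_mem (hreach x hx d hd) g)⟩
  have hV : Xhat.indicator v ≤ reachAvoidProb f X Xr μ := by
    refine le_reachAvoidProb hf hX hXr hXrX (.indicator hXhat hv hvb) (.indicator hXhat hw hwb)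
      (fun x hx => ?_) (fun x hx => ?_) (fun x hx => ?_) (fun x hx => ?_)
    · rw [(hind v hx.1).1, (hind v hx.1).2]
      exact h2 x hx
    · rw [(hind v hx.1).1, (hind w hx.1).1, (hind w hx.1).2]
      exact h3 x hx
    · rw [(hind v (hXrX hx)).1]
      exact h4 x hx
    · by_cases hxh : x ∈ Xhat
      · rw [Set.indicator_of_mem hxh]
        exact h5 x ⟨hxh, hx⟩
      · rw [Set.indicator_of_notMem hxh]
  obtain rfl : Pinf = Measure.infinitePi fun _ => μ := Measure.eq_infinitePi _ hPinf
  calc ε₁ ≤ v x0 := h1 x0 hx0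
    _ = Xhat.indicator v x0 := (hind v (hX0X hx0)).1.symm
    _ ≤ reachAvoidProb f X Xr μ x0 := hV x0

/-- Proposition 1: relaxation of the reach-avoid equation certifies a
lower bound `ε₁` on the reach-avoid probability. -/
theorem statement_1 {n m : ℕ}
    (f : (Fin n → ℝ) → (Fin m → ℝ) → (Fin n → ℝ))
    (hf : Measurable fun p : (Fin n → ℝ) × (Fin m → ℝ) => f p.1 p.2)
    (D : Set (Fin m → ℝ)) (hD : MeasurableSet D)
    (μ : Measure (Fin m → ℝ)) [IsProbabilityMeasure μ] (hμD : μ D = 1)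
    (Pinf : Measure (ℕ → Fin m → ℝ)) [IsProbabilityMeasure Pinf]
    (hPinf : ∀ (s : Finset ℕ) (B : ℕ → Set (Fin m → ℝ)), (∀ i, MeasurableSet (B i)) →
      Pinf {π : ℕ → Fin m → ℝ | ∀ i ∈ s, π i ∈ B i} = ∏ i ∈ s, μ (B i))
    (X Xr X0 Xhat : Set (Fin n → ℝ))
    (hX : MeasurableSet X) (hXr : MeasurableSet Xr) (hX0 : MeasurableSet X0)
    (hXhat : MeasurableSet Xhat)
    (hXrX : Xr ⊆ X) (hX0X : X0 ⊆ X) (hXXhat : X ⊆ Xhat)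
    (hreach : ∀ x ∈ X, ∀ d ∈ D, f x d ∈ Xhat)
    (ε₁ : ℝ) (hε₁ : ε₁ ∈ Set.Icc (0 : ℝ) 1)
    (v w : (Fin n → ℝ) → ℝ) (hv : Measurable v) (hw : Measurable w)
    (hvb : ∃ C, ∀ x ∈ Xhat, |v x| ≤ C) (hwb : ∃ C, ∀ x ∈ Xhat, |w x| ≤ C)
    (h1 : ∀ x ∈ X0, ε₁ ≤ v x)
    (h2 : ∀ x ∈ X \ Xr, v x ≤ ∫ d in D, v (f x d) ∂μ)
    (h3 : ∀ x ∈ X \ Xr, v x ≤ (∫ d in D, w (f x d) ∂μ) - w x)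
    (h4 : ∀ x ∈ Xr, v x ≤ 1)
    (h5 : ∀ x ∈ Xhat \ X, v x ≤ 0) :
    ∀ x0 ∈ X0,
      ε₁ ≤ (Pinf {π : ℕ → Fin m → ℝ |
        ∃ k : ℕ, traj f x0 π k ∈ Xr ∧ ∀ l ≤ k, traj f x0 π l ∈ X}).toReal :=
  statement_1_general f hf D hD μ hμD Pinf hPinf X Xr X0 Xhat hX hXr hXhat hXrX hX0X hXXhat hreach
    ε₁ v w hv hw hvb hwb h1 h2 h3 h4 h5
end
end

section
/- Suppose there exist a bounded Borel measurable function v : 𝒳̂ → ℝ and a bounded Borel measurable function w : 𝒳̂ → ℝ such that for every x ∈ 𝒳̂ one has v(x) = 𝔼^∞[v(φ̂_π^{x}(1))] and v(x) = 1_{𝒳̂∖𝒳}(x) + 𝔼^∞[w(φ̂_π^{x}(1))] − w(x), where 1_{𝒳̂∖𝒳} is the indicator function of 𝒳̂ ∖ 𝒳. Then for every x₀ ∈ 𝒳: v(x₀) = ℙ^∞(∃k ∈ ℕ: φ_π^{x₀}(k) ∈ 𝒳̂ ∖ 𝒳 and ∀i ∈ ℕ with i ≤ k−1: φ_π^{x₀}(i)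 ∈ 𝒳) = ℙ^∞(∃k ∈ ℕ: φ̂_π^{x₀}(k) ∈ 𝒳̂ ∖ 𝒳) = lim_{i→∞} (1/i)·𝔼^∞[Σ_{j=0}^{i−1} 1_{𝒳̂∖𝒳}(φ̂_π^{x₀}(j))], and consequently ℙ^∞(∀k ∈ ℕ: φ_π^{x₀}(k) ∈ 𝒳) = 1 − v(x₀). -/
open MeasureTheory Filter Topology

noncomputable section

lemma integrable_of_bdd' {γ : Type*} {mγ : MeasurableSpace γ} {ν : Measure γ}
    [IsFiniteMeasure ν] {g : γ → ℝ} {C : ℝ} (hg : Measurable g) (hC : ∀ y, |g y| ≤ C) :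
    Integrable g ν :=
  ⟨hg.aestronglyMeasurable, HasFiniteIntegral.of_bounded
    (C := C) (Filter.Eventually.of_forall (by simpa [Real.norm_eq_abs] using hC))⟩

lemma traj_measurable {n m : ℕ} {g : (Fin n → ℝ) → (Fin m → ℝ) → (Fin n → ℝ)}
    (hg : Measurable fun p : (Fin n → ℝ) × (Fin m → ℝ) => g p.1 p.2)
    (x0 : Fin n → ℝ) (k : ℕ) :
    Measurable fun π : ℕ → Fin m → ℝ => traj g x0 π k := by
  induction k with
  | zero => exact measurable_const
  | succ k ih =>
    exact hg.comp (ih.prodMk (measurable_pi_apply k))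

lemma traj_congr {n m : ℕ} (g : (Fin n → ℝ) → (Fin m → ℝ) → (Fin n → ℝ))
    (x0 : Fin n → ℝ) {π π' : ℕ → Fin m → ℝ} :
    ∀ k : ℕ, (∀ i < k, π i = π' i) → traj g x0 π k = traj g x0 π' k := by
  intro k
  induction k with
  | zero => intro _; rfl
  | succ k ih =>
    intro h
    show g (traj g x0 π k) (π k) = g (traj g x0 π' k) (π' k)
    rw [ih (fun i hi => h i (hi.trans (Nat.lt_succ_self k))), h k (Nat.lt_succ_self k)]

lemma map_restrict_pi {m : ℕ}
    (μ : Measure (Fin m → ℝ)) [IsProbabilityMeasure μ]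
    (Pinf : Measure (ℕ → Fin m → ℝ)) [IsProbabilityMeasure Pinf]
    (hPinf : ∀ (s : Finset ℕ) (B : ℕ → Set (Fin m → ℝ)), (∀ i, MeasurableSet (B i)) →
      Pinf {π : ℕ → Fin m → ℝ | ∀ i ∈ s, π i ∈ B i} = ∏ i ∈ s, μ (B i))
    (k : ℕ) :
    Measure.map (fun (π : ℕ → Fin m → ℝ) (i : Fin k) => π (i : ℕ)) Pinf
      = Measure.pi (fun _ : Fin k => μ) := by
  have hrm : Measurable fun (π : ℕ → Fin m → ℝ) (i : Fin k) => π (i : ℕ) :=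
    measurable_pi_lambda _ fun i => measurable_pi_apply _
  refine (Measure.pi_eq (μ := fun _ : Fin k => μ) fun t ht => ?_).symm
  classical
  set B : ℕ → Set (Fin m → ℝ) := fun j => if h : j < k then t ⟨j, h⟩ else Set.univ with hB
  have hBm : ∀ j, MeasurableSet (B j) := by
    intro j
    by_cases h : j < k
    · simpa [hB, h] using ht ⟨j, h⟩
    · simp [hB, h]
  have hset : (fun (π : ℕ → Fin m → ℝ) (i : Fin k) => π (i : ℕ)) ⁻¹' (Set.univ.pi t)
      = {π : ℕ → Fin m → ℝ | ∀ j ∈ Finset.range k, π j ∈ B j} := by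
    ext π
    simp only [Set.mem_preimage, Set.mem_pi, Set.mem_univ, forall_true_left, Set.mem_setOf_eq,
      Finset.mem_range]
    constructor
    · intro h j hj
      simpa [hB, hj] using h ⟨j, hj⟩
    · intro h i
      have := h (i : ℕ) i.isLt
      simpa [hB, i.isLt] using this
  rw [Measure.map_apply hrm (MeasurableSet.univ_pi ht), hset, hPinf _ _ hBm]
  rw [← Fin.prod_univ_eq_prod_range (fun j => μ (B j)) k]
  refine Finset.prod_congr rfl fun i _ => ?_
  simp [hB, i.isLt]
noncomputable section

def extSeq {m : ℕ} (k : ℕ) (σ : Fin k → (Fin m → ℝ)) : ℕ → Fin m → ℝ :=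
  fun i => if h : i < k then σ ⟨i, h⟩ else 0

lemma extSeq_measurable {m k : ℕ} : Measurable (extSeq (m := m) k) := by
  refine measurable_pi_lambda _ fun i => ?_
  by_cases h : i < k
  · simpa [extSeq, h] using measurable_pi_apply (⟨i, h⟩ : Fin k)
  · simpa [extSeq, h] using measurable_const

lemma integral_traj_pushforward {n m : ℕ}
    (μ : Measure (Fin m → ℝ)) [IsProbabilityMeasure μ]
    (Pinf : Measure (ℕ → Fin m → ℝ)) [IsProbabilityMeasure Pinf]
    (hPinf : ∀ (s : Finset ℕ) (B : ℕ → Set (Fin m → ℝ)), (∀ i, MeasurableSet (B i)) →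
      Pinf {π : ℕ → Fin m → ℝ | ∀ i ∈ s, π i ∈ B i} = ∏ i ∈ s, μ (B i))
    {g : (Fin n → ℝ) → (Fin m → ℝ) → (Fin n → ℝ)}
    (hg : Measurable fun p : (Fin n → ℝ) × (Fin m → ℝ) => g p.1 p.2)
    (x0 : Fin n → ℝ) (k : ℕ) {F : (Fin n → ℝ) → ℝ} (hF : Measurable F) :
    ∫ π, F (traj g x0 π k) ∂Pinf
      = ∫ σ : Fin k → (Fin m → ℝ), F (traj g x0 (extSeq k σ) k)
          ∂(Measure.pi fun _ : Fin k => μ) := by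
  have hrm : Measurable fun (π : ℕ → Fin m → ℝ) (i : Fin k) => π (i : ℕ) :=
    measurable_pi_lambda _ fun i => measurable_pi_apply _
  have hFm : Measurable fun σ : Fin k → (Fin m → ℝ) => F (traj g x0 (extSeq k σ) k) :=
    hF.comp ((traj_measurable hg x0 k).comp extSeq_measurable)
  rw [← map_restrict_pi μ Pinf hPinf k,
    integral_map hrm.aemeasurable hFm.aestronglyMeasurable]
  refine integral_congr_ae (Filter.Eventually.of_forall fun π => ?_)
  exact congrArg F (traj_congr g x0 k fun i hi => by simp [extSeq, hi]).symm

lemma kernel_measurable {n m : ℕ} (μ : Measure (Fin m → ℝ)) [IsProbabilityMeasure μ]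
    {g : (Fin n → ℝ) → (Fin m → ℝ) → (Fin n → ℝ)}
    (hg : Measurable fun p : (Fin n → ℝ) × (Fin m → ℝ) => g p.1 p.2)
    {F : (Fin n → ℝ) → ℝ} (hF : Measurable F) :
    Measurable fun y => ∫ d, F (g y d) ∂μ := by
  have : StronglyMeasurable (Function.uncurry fun (y : Fin n → ℝ) (d : Fin m → ℝ) => F (g y d)) :=
    (hF.comp hg).stronglyMeasurable
  exact this.integral_prod_right.measurable

lemma kernel_bdd {n m : ℕ} (μ : Measure (Fin m → ℝ)) [IsProbabilityMeasure μ]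
    {g : (Fin n → ℝ) → (Fin m → ℝ) → (Fin n → ℝ)}
    {F : (Fin n → ℝ) → ℝ} {C : ℝ} (hFb : ∀ x, |F x| ≤ C) (y : Fin n → ℝ) :
    |∫ d, F (g y d) ∂μ| ≤ C := by
  have := norm_integral_le_of_norm_le_const (μ := μ) (f := fun d => F (g y d)) (C := C)
    (Filter.Eventually.of_forall fun d => by simpa [Real.norm_eq_abs] using hFb (g y d))
  simpa [Real.norm_eq_abs] using this

lemma key_step {n m : ℕ}
    (μ : Measure (Fin m → ℝ)) [IsProbabilityMeasure μ]
    (Pinf : Measure (ℕ → Fin m → ℝ)) [IsProbabilityMeasure Pinf]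
    (hPinf : ∀ (s : Finset ℕ) (B : ℕ → Set (Fin m → ℝ)), (∀ i, MeasurableSet (B i)) →
      Pinf {π : ℕ → Fin m → ℝ | ∀ i ∈ s, π i ∈ B i} = ∏ i ∈ s, μ (B i))
    {g : (Fin n → ℝ) → (Fin m → ℝ) → (Fin n → ℝ)}
    (hg : Measurable fun p : (Fin n → ℝ) × (Fin m → ℝ) => g p.1 p.2)
    (x0 : Fin n → ℝ) (k : ℕ) {F : (Fin n → ℝ) → ℝ} (hF : Measurable F)
    {C : ℝ} (hFb : ∀ x, |F x| ≤ C) :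
    ∫ π, F (traj g x0 π (k + 1)) ∂Pinf
      = ∫ π, (∫ d, F (g (traj g x0 π k) d) ∂μ) ∂Pinf := by
  have hGm : Measurable fun y => ∫ d, F (g y d) ∂μ := kernel_measurable μ hg hF
  have htm : Measurable fun σ : Fin k → (Fin m → ℝ) => traj g x0 (extSeq k σ) k :=
    (traj_measurable hg x0 k).comp extSeq_measurable
  -- rewrite RHS
  rw [integral_traj_pushforward μ Pinf hPinf hg x0 k hGm,
    integral_traj_pushforward μ Pinf hPinf hg x0 (k + 1) hF]
  -- decompose the (k+1)-fold product at the last coordinate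
  have hmp := (measurePreserving_piFinSuccAbove
    (fun _ : Fin (k + 1) => μ) (Fin.last k)).symm
  rw [← hmp.integral_comp' (f := (MeasurableEquiv.piFinSuccAbove
      (fun _ : Fin (k + 1) => (Fin m → ℝ)) (Fin.last k)).symm)
      (fun σ => F (traj g x0 (extSeq (k + 1) σ) (k + 1)))]
  have hsnoc : ∀ (q : (Fin m → ℝ) × (Fin k → (Fin m → ℝ))),
      traj g x0 (extSeq (k + 1) ((MeasurableEquiv.piFinSuccAbove
        (fun _ : Fin (k + 1) => (Fin m → ℝ)) (Fin.last k)).symm q)) (k + 1)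
      = g (traj g x0 (extSeq k q.2) k) q.1 := by
    rintro ⟨d, τ⟩
    have hsymm : (MeasurableEquiv.piFinSuccAbove
        (fun _ : Fin (k + 1) => (Fin m → ℝ)) (Fin.last k)).symm (d, τ)
        = Fin.insertNth (Fin.last k) d τ := rfl
    rw [hsymm, Fin.insertNth_last']
    show g (traj g x0 (extSeq (k+1) (Fin.snoc τ d)) k) (extSeq (k+1) (Fin.snoc τ d) k)
      = g (traj g x0 (extSeq k τ) k) d
    have h1 : extSeq (k+1) (Fin.snoc τ d) k = d := by
      have : (⟨k, Nat.lt_succ_self k⟩ : Fin (k+1)) = Fin.last k := rfl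
      simp [extSeq, this, Fin.snoc_last]
    have h2 : traj g x0 (extSeq (k+1) (Fin.snoc τ d)) k = traj g x0 (extSeq k τ) k := by
      refine traj_congr g x0 k fun i hi => ?_
      have hik1 : i < k + 1 := Nat.lt_succ_of_lt hi
      have hik : (⟨i, hik1⟩ : Fin (k+1)) = Fin.castSucc ⟨i, hi⟩ := rfl
      simp only [extSeq]
      rw [dif_pos hik1, dif_pos hi, hik, Fin.snoc_castSucc]
    rw [h1, h2]
  rw [integral_congr_ae (Filter.Eventually.of_forall fun q => congrArg F (hsnoc q))]
  have hint : Integrable (Function.uncurry fun (d : Fin m → ℝ) (τ : Fin k → (Fin m → ℝ)) =>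
      F (g (traj g x0 (extSeq k τ) k) d)) (μ.prod (Measure.pi fun _ : Fin k => μ)) := by
    refine integrable_of_bdd' ?_ (fun q => hFb _)
    exact hF.comp (hg.comp ((htm.comp measurable_snd).prodMk measurable_fst))
  have := integral_integral_swap hint
  simpa using this.symm ▸ (integral_prod _ hint)

/-- Theorem 2: the equation system characterizes the exact probability of
leaving the safe set, hence the exact liveness probability. -/
theorem statement_7 {n m : ℕ}
    (f : (Fin n → ℝ) → (Fin m → ℝ) → (Fin n → ℝ))
    (hf : Measurable fun p : (Fin n → ℝ) × (Fin m → ℝ) => f p.1 p.2)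
    (D : Set (Fin m → ℝ)) (hD : MeasurableSet D)
    (μ : Measure (Fin m → ℝ)) [IsProbabilityMeasure μ] (hμD : μ D = 1)
    (Pinf : Measure (ℕ → Fin m → ℝ)) [IsProbabilityMeasure Pinf]
    (hPinf : ∀ (s : Finset ℕ) (B : ℕ → Set (Fin m → ℝ)), (∀ i, MeasurableSet (B i)) →
      Pinf {π : ℕ → Fin m → ℝ | ∀ i ∈ s, π i ∈ B i} = ∏ i ∈ s, μ (B i))
    (X Xhat : Set (Fin n → ℝ))
    (hX : MeasurableSet X) (hXhat : MeasurableSet Xhat)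
    (hXXhat : X ⊆ Xhat)
    (hreach : ∀ x ∈ X, ∀ d ∈ D, f x d ∈ Xhat)
    (fhat : (Fin n → ℝ) → (Fin m → ℝ) → (Fin n → ℝ))
    (hfhat₁ : ∀ d, ∀ x ∈ X, fhat x d = f x d)
    (hfhat₂ : ∀ d, ∀ x ∉ X, fhat x d = x)
    (v w : (Fin n → ℝ) → ℝ) (hv : Measurable v) (hw : Measurable w)
    (hvb : ∃ C, ∀ x ∈ Xhat, |v x| ≤ C) (hwb : ∃ C, ∀ x ∈ Xhat, |w x| ≤ C)
    (heq1 : ∀ x ∈ Xhat, v x = ∫ d in D, v (fhat x d) ∂μ)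
    (heq2 : ∀ x ∈ Xhat,
      v x = Set.indicator (Xhat \ X) (fun _ => (1 : ℝ)) x
        + (∫ d in D, w (fhat x d) ∂μ) - w x) :
    ∀ x0 ∈ X,
      v x0 = (Pinf {π : ℕ → Fin m → ℝ |
          ∃ k : ℕ, traj f x0 π k ∈ Xhat \ X ∧ ∀ i < k, traj f x0 π i ∈ X}).toReal ∧
      Pinf {π : ℕ → Fin m → ℝ |
          ∃ k : ℕ, traj f x0 π k ∈ Xhat \ X ∧ ∀ i < k, traj f x0 π i ∈ X}
        = Pinf {π : ℕ → Fin m → ℝ | ∃ k : ℕ, traj fhat x0 π k ∈ Xhat \ X} ∧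
      Tendsto (fun i : ℕ =>
          (∫ π, (∑ j ∈ Finset.range i,
              Set.indicator (Xhat \ X) (fun _ => (1 : ℝ)) (traj fhat x0 π j)) ∂Pinf)
            / (i : ℝ)) atTop (𝓝 (v x0)) ∧
      (Pinf {π : ℕ → Fin m → ℝ | ∀ k : ℕ, traj f x0 π k ∈ X}).toReal = 1 - v x0 := by
  classical
  obtain ⟨Cv0, hCv0⟩ := hvb
  obtain ⟨Cw0, hCw0⟩ := hwb
  set Cv := max Cv0 0 with hCvdef
  set Cw := max Cw0 0 with hCwdef
  have hfhat : ∀ x d, fhat x d = if x ∈ X then f x d else x := by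
    intro x d; by_cases h : x ∈ X
    · rw [if_pos h]; exact hfhat₁ d x h
    · rw [if_neg h]; exact hfhat₂ d x h
  have hfhatm : Measurable fun p : (Fin n → ℝ) × (Fin m → ℝ) => fhat p.1 p.2 := by
    have heqf : (fun p : (Fin n → ℝ) × (Fin m → ℝ) => fhat p.1 p.2)
        = fun p => if p.1 ∈ X then f p.1 p.2 else p.1 := by
      funext p; exact hfhat p.1 p.2
    rw [heqf]
    exact Measurable.ite (hX.preimage measurable_fst) hf measurable_fst
  have haeD : ∀ᵐ d ∂μ, d ∈ D := by
    rw [ae_iff]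
    have hc : {d | ¬ d ∈ D} = Dᶜ := rfl
    rw [hc, prob_compl_eq_zero_iff hD]
    exact hμD
  have hres : μ.restrict D = μ := Measure.restrict_eq_self_of_ae_mem haeD
  have hfhatXhat : ∀ y ∈ Xhat, ∀ d ∈ D, fhat y d ∈ Xhat := by
    intro y hy d hd
    by_cases h : y ∈ X
    · rw [hfhat₁ d y h]; exact hreach y h d hd
    · rw [hfhat₂ d y h]; exact hy
  have haeDseq : ∀ᵐ π ∂Pinf, ∀ i, π i ∈ D := by
    rw [ae_iff]
    have hset : {π : ℕ → Fin m → ℝ | ¬ ∀ i, π i ∈ D} = ⋃ i, {π : ℕ → Fin m → ℝ | π i ∈ D}ᶜ := by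
      ext π; simp
    rw [hset]
    refine measure_iUnion_null fun i => ?_
    rw [prob_compl_eq_zero_iff
      (show MeasurableSet {π : ℕ → Fin m → ℝ | π i ∈ D} from measurable_pi_apply i hD)]
    have := hPinf {i} (fun _ => D) (fun _ => hD)
    simpa [hμD] using this
  intro x0 hx0
  set Ind : (Fin n → ℝ) → ℝ := Set.indicator (Xhat \ X) (fun _ => (1 : ℝ)) with hInddef
  set v' : (Fin n → ℝ) → ℝ := Set.indicator Xhat v with hv'def
  set w' : (Fin n → ℝ) → ℝ := Set.indicator Xhat w with hw'def
  have hv'm : Measurable v' := hv.indicator hXhat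
  have hw'm : Measurable w' := hw.indicator hXhat
  have hIndm : Measurable Ind := measurable_const.indicator (hXhat.diff hX)
  have hv'b : ∀ x, |v' x| ≤ Cv := by
    intro x; by_cases h : x ∈ Xhat
    · rw [hv'def, Set.indicator_of_mem h]; exact (hCv0 x h).trans (le_max_left _ _)
    · rw [hv'def, Set.indicator_of_notMem h, abs_zero, hCvdef]; exact le_max_right _ _
  have hw'b : ∀ x, |w' x| ≤ Cw := by
    intro x; by_cases h : x ∈ Xhat
    · rw [hw'def, Set.indicator_of_mem h]; exact (hCw0 x h).trans (le_max_left _ _)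
    · rw [hw'def, Set.indicator_of_notMem h, abs_zero, hCwdef]; exact le_max_right _ _
  have hv'eq : ∀ x ∈ Xhat, v' x = v x := fun x h => Set.indicator_of_mem h v
  have hw'eq : ∀ x ∈ Xhat, w' x = w x := fun x h => Set.indicator_of_mem h w
  have hInd0 : ∀ x, 0 ≤ Ind x := by
    intro x; by_cases h : x ∈ Xhat \ X <;>
      simp [hInddef, Set.indicator_of_mem, Set.indicator_of_notMem, h]
  have hInd1 : ∀ x, Ind x ≤ 1 := by
    intro x; by_cases h : x ∈ Xhat \ X <;>
      simp [hInddef, Set.indicator_of_mem, Set.indicator_of_notMem, h]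
  have hIndb : ∀ x, |Ind x| ≤ 1 := fun x => by
    rw [abs_of_nonneg (hInd0 x)]; exact hInd1 x
  -- kernel identities
  have hPv : ∀ y ∈ Xhat, ∫ d, v' (fhat y d) ∂μ = v y := by
    intro y hy
    have h1 : (fun d => v' (fhat y d)) =ᵐ[μ] fun d => v (fhat y d) := by
      filter_upwards [haeD] with d hd
      exact hv'eq _ (hfhatXhat y hy d hd)
    rw [integral_congr_ae h1, ← hres]
    exact (heq1 y hy).symm
  have hPw : ∀ y ∈ Xhat, ∫ d, w' (fhat y d) ∂μ = v y - Ind y + w y := by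
    intro y hy
    have h1 : (fun d => w' (fhat y d)) =ᵐ[μ] fun d => w (fhat y d) := by
      filter_upwards [haeD] with d hd
      exact hw'eq _ (hfhatXhat y hy d hd)
    rw [integral_congr_ae h1, ← hres]
    have h2 := heq2 y hy
    linarith
  have haeXhat : ∀ᵐ π ∂Pinf, ∀ k, traj fhat x0 π k ∈ Xhat := by
    filter_upwards [haeDseq] with π hπ
    intro k; induction k with
    | zero => exact hXXhat hx0
    | succ k ih => exact hfhatXhat _ ih (π k) (hπ k)
  have hIv : ∀ k, ∫ π, v' (traj fhat x0 π k) ∂Pinf = v x0 := by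
    intro k; induction k with
    | zero =>
      show ∫ _π, v' x0 ∂Pinf = v x0
      rw [integral_const]
      simp [hv'eq x0 (hXXhat hx0)]
    | succ k ih =>
      rw [key_step μ Pinf hPinf hfhatm x0 k hv'm hv'b, ← ih]
      refine integral_congr_ae ?_
      filter_upwards [haeXhat] with π hπ
      rw [hPv _ (hπ k), hv'eq _ (hπ k)]
  set b : ℕ → ℝ := fun k => ∫ π, w' (traj fhat x0 π k) ∂Pinf with hbdef
  have hbb : ∀ k, |b k| ≤ Cw := by
    intro k
    have := norm_integral_le_of_norm_le_const (μ := Pinf)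
      (f := fun π => w' (traj fhat x0 π k)) (C := Cw)
      (Filter.Eventually.of_forall fun π => by simpa [Real.norm_eq_abs] using hw'b _)
    simpa [hbdef, Real.norm_eq_abs] using this
  have hb0 : b 0 = w x0 := by
    have : b 0 = ∫ _π, w' x0 ∂Pinf := rfl
    rw [this, integral_const]
    simp [hw'eq x0 (hXXhat hx0)]
  have hIk : ∀ k, ∫ π, Ind (traj fhat x0 π k) ∂Pinf = v x0 + b k - b (k + 1) := by
    intro k
    have hbk1 : b (k + 1) = ∫ π, (∫ d, w' (fhat (traj fhat x0 π k) d) ∂μ) ∂Pinf := by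
      rw [hbdef]
      exact key_step μ Pinf hPinf hfhatm x0 k hw'm hw'b
    have hae2 : (fun π => Ind (traj fhat x0 π k)) =ᵐ[Pinf]
        fun π => v' (traj fhat x0 π k) + w' (traj fhat x0 π k)
          - (∫ d, w' (fhat (traj fhat x0 π k) d) ∂μ) := by
      filter_upwards [haeXhat] with π hπ
      rw [hPw _ (hπ k), hv'eq _ (hπ k), hw'eq _ (hπ k)]
      ring
    have hi1 : Integrable (fun π => v' (traj fhat x0 π k)) Pinf :=
      integrable_of_bdd' (hv'm.comp (traj_measurable hfhatm x0 k)) (fun π => hv'b _)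
    have hi2 : Integrable (fun π => w' (traj fhat x0 π k)) Pinf :=
      integrable_of_bdd' (hw'm.comp (traj_measurable hfhatm x0 k)) (fun π => hw'b _)
    have hi3 : Integrable (fun π => ∫ d, w' (fhat (traj fhat x0 π k) d) ∂μ) Pinf :=
      integrable_of_bdd' ((kernel_measurable μ hfhatm hw'm).comp (traj_measurable hfhatm x0 k))
        (fun π => kernel_bdd μ hw'b _)
    have hi12 : Integrable (fun π => v' (traj fhat x0 π k) + w' (traj fhat x0 π k)) Pinf :=
      hi1.add hi2
    rw [integral_congr_ae hae2, integral_sub hi12 hi3, integral_add hi1 hi2, hIv k, ← hbk1]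

  have hS : ∀ i : ℕ, ∫ π, (∑ j ∈ Finset.range i, Ind (traj fhat x0 π j)) ∂Pinf
      = i * v x0 + (w x0 - b i) := by
    intro i
    have hIint : ∀ j : ℕ, Integrable (fun π => Ind (traj fhat x0 π j)) Pinf := fun j =>
      integrable_of_bdd' (hIndm.comp (traj_measurable hfhatm x0 j)) (fun π => hIndb _)
    rw [integral_finset_sum _ (fun j _ => hIint j)]
    have hc : ∀ j ∈ Finset.range i,
        ∫ π, Ind (traj fhat x0 π j) ∂Pinf = v x0 + (b j - b (j + 1)) := by
      intro j _; rw [hIk j]; ring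
    rw [Finset.sum_congr rfl hc, Finset.sum_add_distrib, Finset.sum_const,
      Finset.sum_range_sub' b i, hb0, Finset.card_range]
    simp only [nsmul_eq_mul]
  -- limit towards v x0
  have htendV : Tendsto (fun i : ℕ =>
      (∫ π, (∑ j ∈ Finset.range i, Ind (traj fhat x0 π j)) ∂Pinf) / (i : ℝ))
      atTop (𝓝 (v x0)) := by
    have hz : Tendsto (fun i : ℕ => (w x0 - b i) / (i : ℝ)) atTop (𝓝 0) := by
      refine squeeze_zero_norm (fun i => ?_) (tendsto_const_div_atTop_nhds_zero_nat (|w x0| + Cw))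
      rcases Nat.eq_zero_or_pos i with hi | hi
      · subst hi; simp
      · have hipos : (0 : ℝ) < i := by exact_mod_cast hi
        rw [norm_div, Real.norm_natCast]
        have h1 : ‖w x0 - b i‖ ≤ |w x0| + Cw := by
          refine (norm_sub_le _ _).trans ?_
          have := hbb i
          rw [Real.norm_eq_abs, Real.norm_eq_abs]
          linarith
        exact div_le_div_of_nonneg_right h1 hipos.le |>.trans (le_of_eq rfl)
    have hmain : Tendsto (fun i : ℕ => v x0 + (w x0 - b i) / (i : ℝ)) atTop (𝓝 (v x0)) := by
      have := tendsto_const_nhds (x := v x0) (f := atTop (α := ℕ)) |>.add hz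
      simpa using this
    refine hmain.congr' ?_
    filter_upwards [eventually_ge_atTop 1] with i hi
    have hi0 : (i : ℝ) ≠ 0 := by
      have : (0 : ℝ) < i := by exact_mod_cast hi
      exact ne_of_gt this
    rw [hS i]
    field_simp
  -- the event B for the stopped system
  set B : Set (ℕ → Fin m → ℝ) := {π | ∃ k, traj fhat x0 π k ∈ Xhat \ X} with hBdef
  have hBm : MeasurableSet B := by
    have hBeq : B = ⋃ k, (fun π => traj fhat x0 π k) ⁻¹' (Xhat \ X) := by
      ext π; simp [hBdef, Set.mem_iUnion]
    rw [hBeq]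
    exact MeasurableSet.iUnion fun k => (hXhat.diff hX).preimage (traj_measurable hfhatm x0 k)
  have hfreeze : ∀ (π : ℕ → Fin m → ℝ) (k0 : ℕ), traj fhat x0 π k0 ∉ X →
      ∀ j, traj fhat x0 π (k0 + j) = traj fhat x0 π k0 := by
    intro π k0 h j
    induction j with
    | zero => rfl
    | succ j ih =>
      show fhat (traj fhat x0 π (k0 + j)) (π (k0 + j)) = _
      rw [ih]
      exact hfhat₂ _ _ h
  -- limit towards the probability of B (dominated convergence)
  have htendB : Tendsto (fun i : ℕ =>
      (∫ π, (∑ j ∈ Finset.range i, Ind (traj fhat x0 π j)) ∂Pinf) / (i : ℝ))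
      atTop (𝓝 ((Pinf B).toReal)) := by
    have hinteq : ∀ i : ℕ,
        (∫ π, (∑ j ∈ Finset.range i, Ind (traj fhat x0 π j)) ∂Pinf) / (i : ℝ)
        = ∫ π, (∑ j ∈ Finset.range i, Ind (traj fhat x0 π j)) / (i : ℝ) ∂Pinf :=
      fun i => (integral_div _ _).symm
    have hBint : ∫ π, Set.indicator B (fun _ => (1 : ℝ)) π ∂Pinf = (Pinf B).toReal := by
      simpa [Measure.real, Pi.one_def] using integral_indicator_one (μ := Pinf) hBm
    have hdct := tendsto_integral_of_dominated_convergence (μ := Pinf)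
      (F := fun (i : ℕ) (π : ℕ → Fin m → ℝ) =>
        (∑ j ∈ Finset.range i, Ind (traj fhat x0 π j)) / (i : ℝ))
      (f := Set.indicator B (fun _ => (1 : ℝ))) (bound := fun _ => 1)
      (fun i => ((Finset.measurable_sum _ fun j _ =>
        hIndm.comp (traj_measurable hfhatm x0 j)).div_const _).aestronglyMeasurable)
      (integrable_const 1)
      ?_ ?_
    · rw [hBint] at hdct
      exact (Tendsto.congr (fun i => (hinteq i).symm)) hdct
    · -- bound
      intro i
      refine Filter.Eventually.of_forall fun π => ?_
      have hnn : 0 ≤ ∑ j ∈ Finset.range i, Ind (traj fhat x0 π j) :=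
        Finset.sum_nonneg fun j _ => hInd0 _
      have hub : ∑ j ∈ Finset.range i, Ind (traj fhat x0 π j) ≤ i := by
        calc ∑ j ∈ Finset.range i, Ind (traj fhat x0 π j)
            ≤ ∑ _j ∈ Finset.range i, (1 : ℝ) := Finset.sum_le_sum fun j _ => hInd1 _
          _ = i := by simp
      rcases Nat.eq_zero_or_pos i with hi | hi
      · subst hi; simp
      · have hipos : (0 : ℝ) < i := by exact_mod_cast hi
        rw [Real.norm_eq_abs, abs_of_nonneg (div_nonneg hnn (le_of_lt hipos)),
          div_le_one hipos]
        exact hub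
    · -- a.e. pointwise convergence
      filter_upwards [haeDseq] with π hπ
      by_cases hb : π ∈ B
      · rw [Set.indicator_of_mem hb]
        have hb' : ∃ k, traj fhat x0 π k ∈ Xhat \ X := hb
        obtain ⟨k0, hk0⟩ := hb'
        have hfr : ∀ j, k0 ≤ j → traj fhat x0 π j ∈ Xhat \ X := by
          intro j hj
          have h2 := hfreeze π k0 hk0.2 (j - k0)
          rw [Nat.add_sub_cancel' hj] at h2
          rw [h2]; exact hk0
        set c := ∑ j ∈ Finset.range k0, Ind (traj fhat x0 π j) with hcdef
        have hsum : ∀ i : ℕ, k0 ≤ i →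
            (∑ j ∈ Finset.range i, Ind (traj fhat x0 π j)) = c + ((i : ℝ) - k0) := by
          intro i hi
          rw [Finset.range_eq_Ico,
            ← Finset.sum_Ico_consecutive _ (Nat.zero_le k0) hi, ← Finset.range_eq_Ico]
          have hone : ∀ j ∈ Finset.Ico k0 i, Ind (traj fhat x0 π j) = 1 := by
            intro j hj
            have hmem := hfr j (Finset.mem_Ico.mp hj).1
            rw [hInddef]; exact Set.indicator_of_mem hmem _
          rw [Finset.sum_congr rfl hone, Finset.sum_const, Nat.card_Ico, nsmul_eq_mul,
            mul_one, Nat.cast_sub hi]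
        have hmain : Tendsto (fun i : ℕ => (c - (k0 : ℝ)) / i + 1) atTop (𝓝 1) := by
          have := (tendsto_const_div_atTop_nhds_zero_nat (c - (k0 : ℝ))).add
            (tendsto_const_nhds (x := (1 : ℝ)))
          simpa using this
        refine hmain.congr' ?_
        filter_upwards [eventually_ge_atTop (max k0 1)] with i hi
        have hik0 : k0 ≤ i := le_trans (le_max_left _ _) hi
        have hi1 : 1 ≤ i := le_trans (le_max_right _ _) hi
        have hi0 : (i : ℝ) ≠ 0 := by
          have : (0 : ℝ) < i := by exact_mod_cast hi1
          exact ne_of_gt this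
        rw [hsum i hik0]
        field_simp
        ring
      · rw [Set.indicator_of_notMem hb]
        have hz : ∀ i : ℕ, (∑ j ∈ Finset.range i, Ind (traj fhat x0 π j)) / (i : ℝ) = 0 := by
          intro i
          have h0 : ∀ j ∈ Finset.range i, Ind (traj fhat x0 π j) = 0 := by
            intro j _
            rw [hInddef]
            refine Set.indicator_of_notMem (fun hmem => hb ⟨j, hmem⟩) _
          rw [Finset.sum_congr rfl h0]
          simp
        exact Tendsto.congr (fun i => (hz i).symm) tendsto_const_nhds
  have hveqB : v x0 = (Pinf B).toReal := tendsto_nhds_unique htendV htendB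
  -- pathwise relation between the stopped and non-stopped systems
  have hboth2 : ∀ (π : ℕ → Fin m → ℝ) (k : ℕ), (∀ i < k, traj f x0 π i ∈ X) →
      traj fhat x0 π k = traj f x0 π k := by
    intro π k
    induction k with
    | zero => intro _; rfl
    | succ k ih =>
      intro h
      show fhat (traj fhat x0 π k) (π k) = f (traj f x0 π k) (π k)
      rw [ih (fun i hi => h i (hi.trans (Nat.lt_succ_self k)))]
      exact hfhat₁ _ _ (h k (Nat.lt_succ_self k))
  have hboth : ∀ (π : ℕ → Fin m → ℝ) (k : ℕ), (∀ i < k, traj fhat x0 π i ∈ X) →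
      traj fhat x0 π k = traj f x0 π k := by
    intro π k
    induction k with
    | zero => intro _; rfl
    | succ k ih =>
      intro h
      have hik := ih (fun i hi => h i (hi.trans (Nat.lt_succ_self k)))
      show fhat (traj fhat x0 π k) (π k) = f (traj f x0 π k) (π k)
      rw [← hik]
      exact hfhat₁ _ _ (h k (Nat.lt_succ_self k))
  have hAB : {π : ℕ → Fin m → ℝ |
      ∃ k : ℕ, traj f x0 π k ∈ Xhat \ X ∧ ∀ i < k, traj f x0 π i ∈ X} = B := by
    ext π
    simp only [Set.mem_setOf_eq, hBdef]
    constructor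
    · rintro ⟨k, hk, hprev⟩
      exact ⟨k, by rw [hboth2 π k hprev]; exact hk⟩
    · rintro ⟨k, hk⟩
      have hexx : ∃ j, traj fhat x0 π j ∉ X := ⟨k, hk.2⟩
      have hk0 : traj fhat x0 π (Nat.find hexx) ∉ X := Nat.find_spec hexx
      have hmin : ∀ i < Nat.find hexx, traj fhat x0 π i ∈ X :=
        fun i hi => not_not.mp (Nat.find_min hexx hi)
      have hkge : Nat.find hexx ≤ k := by
        by_contra hlt
        push_neg at hlt
        exact hk.2 (hmin k hlt)
      have hfrz := hfreeze π (Nat.find hexx) hk0 (k - Nat.find hexx)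
      rw [Nat.add_sub_cancel' hkge] at hfrz
      have hk0mem : traj fhat x0 π (Nat.find hexx) ∈ Xhat \ X := by
        rw [← hfrz]; exact hk
      refine ⟨Nat.find hexx, ?_, ?_⟩
      · rw [← hboth π (Nat.find hexx) hmin]; exact hk0mem
      · intro i hi
        rw [← hboth π i (fun j hj => hmin j (hj.trans hi))]
        exact hmin i hi
  refine ⟨?_, ?_, ?_, ?_⟩
  · rw [hAB]; exact hveqB
  · rw [hAB]
  · exact htendV
  · -- liveness probability
    have hDset0 : Pinf {π : ℕ → Fin m → ℝ | ∀ i, π i ∈ D}ᶜ = 0 := by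
      have h := haeDseq
      rw [ae_iff] at h
      have : {π : ℕ → Fin m → ℝ | ∀ i, π i ∈ D}ᶜ
          = {π : ℕ → Fin m → ℝ | ¬ ∀ i, π i ∈ D} := by
        ext π; simp
      rw [this]; exact h
    have hsafe_eq : {π : ℕ → Fin m → ℝ | ∀ k, traj f x0 π k ∈ X}
          ∩ {π : ℕ → Fin m → ℝ | ∀ i, π i ∈ D}
        = Bᶜ ∩ {π : ℕ → Fin m → ℝ | ∀ i, π i ∈ D} := by
      ext π
      simp only [Set.mem_inter_iff, Set.mem_setOf_eq, Set.mem_compl_iff, hBdef]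
      constructor
      · rintro ⟨hs, hd⟩
        refine ⟨?_, hd⟩
        rintro ⟨k, hk⟩
        rw [hboth2 π k (fun i _ => hs i)] at hk
        exact hk.2 (hs k)
      · rintro ⟨hnb, hd⟩
        refine ⟨?_, hd⟩
        intro k
        by_contra hknx
        have hexx : ∃ j, traj f x0 π j ∉ X := ⟨k, hknx⟩
        have hk0 : traj f x0 π (Nat.find hexx) ∉ X := Nat.find_spec hexx
        have hmin : ∀ i < Nat.find hexx, traj f x0 π i ∈ X :=
          fun i hi => not_not.mp (Nat.find_min hexx hi)
        obtain ⟨j, hj⟩ : ∃ j, Nat.find hexx = j + 1 := by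
          refine Nat.exists_eq_succ_of_ne_zero fun h0 => ?_
          rw [h0] at hk0
          exact hk0 hx0
        have hXhatk0 : traj f x0 π (Nat.find hexx) ∈ Xhat := by
          rw [hj]
          show f (traj f x0 π j) (π j) ∈ Xhat
          exact hreach _ (hmin j (hj ▸ Nat.lt_succ_self j)) _ (hd j)
        refine hnb ⟨Nat.find hexx, ?_⟩
        rw [hboth2 π (Nat.find hexx) hmin]
        exact ⟨hXhatk0, hk0⟩
    have h1 : Pinf {π : ℕ → Fin m → ℝ | ∀ k, traj f x0 π k ∈ X} = Pinf Bᶜ := by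
      rw [← measure_inter_conull hDset0, hsafe_eq, measure_inter_conull hDset0]
    rw [h1, measure_compl hBm (measure_ne_top _ _), measure_univ,
      ENNReal.toReal_sub_of_le prob_le_one (by simp), hveqB]
    simp
end
end
end

section
/- Suppose v : 𝒳̂ → ℝ is a bounded Borel measurable function and w : 𝒳̂ → ℝ is a bounded Borel measurable function such that for every x ∈ 𝒳̂: v(x) ≥ 𝔼^∞[v(φ̂_π^{x}(1))] and v(x) ≥ 1_{𝒳̂∖𝒳}(x) + 𝔼^∞[w(φ̂_π^{x}(1))] − w(x), where 1_{𝒳̂∖𝒳} is the indicator function of 𝒳̂ ∖ 𝒳. Then v(x) ≥ 0 for all x ∈ 𝒳̂. (Consequently, the equation-relaxation constraint system of Proposition 5, which does not explicitly require nonnegativity of v, is equivalent to the barrier-certificate constraint system of Proposition 3, which does.) -/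
open MeasureTheory Filter Topology

noncomputable section

/-- Lemma 1: any solution of the relaxed equation system is automatically
nonnegative on `𝒳̂`. -/
theorem statement_9 {n m : ℕ}
    (f : (Fin n → ℝ) → (Fin m → ℝ) → (Fin n → ℝ))
    (hf : Measurable fun p : (Fin n → ℝ) × (Fin m → ℝ) => f p.1 p.2)
    (D : Set (Fin m → ℝ)) (hD : MeasurableSet D)
    (μ : Measure (Fin m → ℝ)) [IsProbabilityMeasure μ] (hμD : μ D = 1)
    (Pinf : Measure (ℕ → Fin m → ℝ)) [IsProbabilityMeasure Pinf]
    (hPinf : ∀ (s : Finset ℕ) (B : ℕ → Set (Fin m → ℝ)), (∀ i, MeasurableSet (B i)) →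
      Pinf {π : ℕ → Fin m → ℝ | ∀ i ∈ s, π i ∈ B i} = ∏ i ∈ s, μ (B i))
    (X Xhat : Set (Fin n → ℝ))
    (hX : MeasurableSet X) (hXhat : MeasurableSet Xhat)
    (hXXhat : X ⊆ Xhat)
    (hreach : ∀ x ∈ X, ∀ d ∈ D, f x d ∈ Xhat)
    (fhat : (Fin n → ℝ) → (Fin m → ℝ) → (Fin n → ℝ))
    (hfhat₁ : ∀ d, ∀ x ∈ X, fhat x d = f x d)
    (hfhat₂ : ∀ d, ∀ x ∉ X, fhat x d = x)
    (v w : (Fin n → ℝ) → ℝ) (hv : Measurable v) (hw : Measurable w)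
    (hvb : ∃ C, ∀ x ∈ Xhat, |v x| ≤ C) (hwb : ∃ C, ∀ x ∈ Xhat, |w x| ≤ C)
    (h1 : ∀ x ∈ Xhat, (∫ d in D, v (fhat x d) ∂μ) ≤ v x)
    (h2 : ∀ x ∈ Xhat,
      Set.indicator (Xhat \ X) (fun _ => (1 : ℝ)) x
        + (∫ d in D, w (fhat x d) ∂μ) - w x ≤ v x) :
    ∀ x ∈ Xhat, 0 ≤ v x := by
  -- `μ Dᶜ = 0`, so restricting to `D` does nothing
  have hDc : μ Dᶜ = 0 := by
    have := measure_compl hD (measure_ne_top μ D)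
    rw [hμD, measure_univ] at this
    simpa using this
  have hrest : μ.restrict D = μ := by
    rw [Measure.restrict_congr_set (MeasureTheory.ae_eq_univ.mpr hDc), Measure.restrict_univ]
  have haeD : ∀ᵐ d ∂μ, d ∈ D := by
    rw [MeasureTheory.ae_iff]
    exact hDc
  -- `fhat` maps `Xhat × D` into `Xhat`
  have hinv : ∀ x ∈ Xhat, ∀ d ∈ D, fhat x d ∈ Xhat := by
    intro x hx d hd
    by_cases hxX : x ∈ X
    · rw [hfhat₁ d x hxX]; exact hreach x hxX d hd
    · rw [hfhat₂ d x hxX]; exact hx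
  -- measurability of sections of `fhat`
  have hsect : ∀ x, Measurable fun e => fhat x e := by
    intro x
    by_cases hxX : x ∈ X
    · have : (fun e => fhat x e) = fun e => f x e := by
        funext e; exact hfhat₁ e x hxX
      rw [this]
      exact hf.comp (measurable_prodMk_left)
    · have : (fun e => fhat x e) = fun _ => x := by
        funext e; exact hfhat₂ e x hxX
      rw [this]
      exact measurable_const
  obtain ⟨Cv, hCv⟩ := hvb
  obtain ⟨Cw, hCw⟩ := hwb
  -- integrability of bounded measurable compositions
  have hint : ∀ (g : (Fin n → ℝ) → ℝ), Measurable g → ∀ C, (∀ y ∈ Xhat, |g y| ≤ C) →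
      ∀ x ∈ Xhat, Integrable (fun e => g (fhat x e)) μ := by
    intro g hg C hC x hx
    refine (integrable_const C).mono' ((hg.comp (hsect x)).aestronglyMeasurable) ?_
    filter_upwards [haeD] with e he
    rw [Real.norm_eq_abs]
    exact hC _ (hinv x hx e he)
  have h1' : ∀ x ∈ Xhat, (∫ d, v (fhat x d) ∂μ) ≤ v x := by
    intro x hx; have := h1 x hx; rwa [hrest] at this
  have h2' : ∀ x ∈ Xhat, (∫ d, w (fhat x d) ∂μ) ≤ v x + w x := by
    intro x hx
    have := h2 x hx; rw [hrest] at this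
    have hind : 0 ≤ Set.indicator (Xhat \ X) (fun _ => (1 : ℝ)) x :=
      Set.indicator_nonneg (fun _ _ => zero_le_one) x
    linarith
  -- key induction
  have key : ∀ N : ℕ, ∀ x ∈ Xhat, -Cw ≤ N * v x + w x := by
    intro N
    induction N with
    | zero =>
      intro x hx
      have := (abs_le.mp (hCw x hx)).1
      simpa using by linarith
    | succ N IH =>
      intro x hx
      have int_v : Integrable (fun e => v (fhat x e)) μ := hint v hv Cv hCv x hx
      have int_w : Integrable (fun e => w (fhat x e)) μ := hint w hw Cw hCw x hx
      have int_sum : Integrable (fun e => (N : ℝ) * v (fhat x e) + w (fhat x e)) μ :=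
        (int_v.const_mul _).add int_w
      have hae1 : ∀ᵐ e ∂μ, -Cw ≤ (N : ℝ) * v (fhat x e) + w (fhat x e) := by
        filter_upwards [haeD] with e he using IH _ (hinv x hx e he)
      have step1 : -Cw ≤ ∫ e, ((N : ℝ) * v (fhat x e) + w (fhat x e)) ∂μ := by
        have := integral_mono_ae (integrable_const (-Cw)) int_sum hae1
        simpa [integral_const, measure_univ] using this
      rw [integral_add (int_v.const_mul _) int_w, integral_const_mul] at step1
      have hNv : (N : ℝ) * (∫ e, v (fhat x e) ∂μ) ≤ (N : ℝ) * v x :=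
        mul_le_mul_of_nonneg_left (h1' x hx) (Nat.cast_nonneg N)
      have hwle := h2' x hx
      push_cast
      linarith
  -- conclude
  intro x hx
  by_contra hneg
  push_neg at hneg
  obtain ⟨N, hN⟩ := exists_nat_gt ((-Cw - w x) / v x)
  have hkey := key N x hx
  have : (N : ℝ) ≤ (-Cw - w x) / v x := by
    rw [le_div_iff_of_neg hneg]
    linarith
  linarith
end
end

section
/- Let ε₂ ∈ [0,1]. Suppose there exist a bounded Borel measurable function v : 𝒳̂ → ℝ and a bounded Borel measurable function w : 𝒳̂ → ℝ such that: v(x) ≥ 1 − ε₂ for all x ∈ 𝒳₀; v(x) ≤ 𝔼^∞[v(φ_π^{x}(1))] for all x ∈ 𝒳; v(x) ≤ 𝔼^∞[w(φ_π^{x}(1))] − w(x) for all x ∈ 𝒳; and v(x) ≤ 1 for all x ∈ 𝒳̂ ∖ 𝒳. Then for every x₀ ∈ 𝒳, ℙ^∞(∃k ∈ ℕ: φ_π^{x₀}(k) ∈ 𝒳̂ ∖ 𝒳 and ∀i ∈ ℕ with i ≤ k−1: φ_π^{x₀}(i) ∈ 𝒳) ≥ v(x₀); in particular, for every x₀ ∈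 𝒳₀ this probability is at least 1 − ε₂, and consequently ℙ^∞(∀k ∈ ℕ: φ_π^{x₀}(k) ∈ 𝒳) ≤ ε₂ for every x₀ ∈ 𝒳₀. -/
open MeasureTheory Filter Topology

noncomputable section

namespace Statement10Aux

lemma traj_succ {n m : ℕ} (f : (Fin n → ℝ) → (Fin m → ℝ) → (Fin n → ℝ))
    (x0 : Fin n → ℝ) (π : ℕ → Fin m → ℝ) (k : ℕ) :
    traj f x0 π (k + 1) = f (traj f x0 π k) (π k) := rfl

lemma traj_measurable {n m : ℕ} {f : (Fin n → ℝ) → (Fin m → ℝ) → (Fin n → ℝ)}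
    (hf : Measurable fun p : (Fin n → ℝ) × (Fin m → ℝ) => f p.1 p.2)
    (x0 : Fin n → ℝ) (k : ℕ) :
    Measurable fun π : ℕ → Fin m → ℝ => traj f x0 π k := by
  induction k with
  | zero => exact measurable_const
  | succ k ih => exact hf.comp (ih.prodMk (measurable_pi_apply k))

lemma traj_congr {n m : ℕ} (f : (Fin n → ℝ) → (Fin m → ℝ) → (Fin n → ℝ))
    (x0 : Fin n → ℝ) {π π' : ℕ → Fin m → ℝ} :
    ∀ k : ℕ, (∀ i, i < k → π i = π' i) → traj f x0 π k = traj f x0 π' k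
  | 0, _ => rfl
  | (k + 1), h => by
      rw [traj_succ, traj_succ,
        traj_congr f x0 k (fun i hi => h i (Nat.lt_succ_of_lt hi)), h k (Nat.lt_succ_self k)]

lemma einf_measurable {n m : ℕ} {f : (Fin n → ℝ) → (Fin m → ℝ) → (Fin n → ℝ)}
    (hf : Measurable fun p : (Fin n → ℝ) × (Fin m → ℝ) => f p.1 p.2)
    (x0 : Fin n → ℝ) {X Xhat : Set (Fin n → ℝ)}
    (hX : MeasurableSet X) (hXhat : MeasurableSet Xhat) :
    MeasurableSet {π : ℕ → Fin m → ℝ |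
      ∃ k : ℕ, traj f x0 π k ∈ Xhat \ X ∧ ∀ i < k, traj f x0 π i ∈ X} := by
  have : {π : ℕ → Fin m → ℝ |
      ∃ k : ℕ, traj f x0 π k ∈ Xhat \ X ∧ ∀ i < k, traj f x0 π i ∈ X}
      = ⋃ j : ℕ, ((fun π => traj f x0 π j) ⁻¹' (Xhat \ X)
        ∩ ⋂ i ∈ {i : ℕ | i < j}, (fun π => traj f x0 π i) ⁻¹' X) := by
    ext π; simp
  rw [this]
  exact MeasurableSet.iUnion fun j => ((traj_measurable hf x0 j) (hXhat.diff hX)).inter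
    (MeasurableSet.biInter (Set.to_countable _) fun i _ => (traj_measurable hf x0 i) hX)

lemma map_proj {m : ℕ} (μ : Measure (Fin m → ℝ)) [IsProbabilityMeasure μ]
    (Pinf : Measure (ℕ → Fin m → ℝ)) [IsProbabilityMeasure Pinf]
    (hPinf : ∀ (s : Finset ℕ) (B : ℕ → Set (Fin m → ℝ)), (∀ i, MeasurableSet (B i)) →
      Pinf {π : ℕ → Fin m → ℝ | ∀ i ∈ s, π i ∈ B i} = ∏ i ∈ s, μ (B i))
    (K : ℕ) :
    Measure.map (fun (π : ℕ → Fin m → ℝ) (i : Fin K) => π i) Pinf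
      = Measure.pi (fun _ : Fin K => μ) := by
  refine (Measure.pi_eq fun s hs => ?_).symm
  have hproj : Measurable fun (π : ℕ → Fin m → ℝ) (i : Fin K) => π i :=
    measurable_pi_lambda _ fun i => measurable_pi_apply _
  rw [Measure.map_apply hproj (MeasurableSet.univ_pi hs)]
  have hset : (fun (π : ℕ → Fin m → ℝ) (i : Fin K) => π (i : ℕ)) ⁻¹' Set.univ.pi s
      = {π : ℕ → Fin m → ℝ | ∀ i ∈ Finset.range K,
          π i ∈ (if h : i < K then s ⟨i, h⟩ else Set.univ)} := by
    ext π
    simp only [Set.mem_preimage, Set.mem_pi, Set.mem_univ, forall_true_left, Set.mem_setOf_eq,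
      Finset.mem_range]
    constructor
    · intro h i hi
      simpa [dif_pos hi] using h ⟨i, hi⟩
    · intro h i
      simpa [dif_pos i.isLt] using h i i.isLt
  rw [hset, hPinf _ _ (fun i => by by_cases h : i < K <;> simp [h, hs])]
  rw [← Fin.prod_univ_eq_prod_range
    (fun j => μ (if h : j < K then s ⟨j, h⟩ else Set.univ)) K]
  exact Finset.prod_congr rfl fun i _ => by simp [i.isLt]

lemma key_lemma {m : ℕ} (μ : Measure (Fin m → ℝ)) [IsProbabilityMeasure μ]
    (Pinf : Measure (ℕ → Fin m → ℝ)) [IsProbabilityMeasure Pinf]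
    (hPinf : ∀ (s : Finset ℕ) (B : ℕ → Set (Fin m → ℝ)), (∀ i, MeasurableSet (B i)) →
      Pinf {π : ℕ → Fin m → ℝ | ∀ i ∈ s, π i ∈ B i} = ∏ i ∈ s, μ (B i))
    (k : ℕ) (H : (Fin k → Fin m → ℝ) × (Fin m → ℝ) → ℝ)
    (hH : Measurable H) (C : ℝ) (hC : ∀ p, |H p| ≤ C) :
    ∫ π, H (fun i : Fin k => π i, π k) ∂Pinf
      = ∫ π, ∫ d, H (fun i : Fin k => π i, d) ∂μ ∂Pinf := by
  have hproj : ∀ K : ℕ, Measurable fun (π : ℕ → Fin m → ℝ) (i : Fin K) => π i :=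
    fun K => measurable_pi_lambda _ fun i => measurable_pi_apply _
  have hpair : Measurable fun π : ℕ → Fin m → ℝ => ((fun i : Fin k => π i), π k) :=
    (hproj k).prodMk (measurable_pi_apply k)
  have hmap2 : Measure.map (fun π : ℕ → Fin m → ℝ => ((fun i : Fin k => π i), π k)) Pinf
      = (Measure.pi fun _ : Fin k => μ).prod μ := by
    have hφ := measurePreserving_piFinSuccAbove (fun _ : Fin (k+1) => μ) (Fin.last k)
    have h1 : (fun π : ℕ → Fin m → ℝ => ((fun i : Fin k => π i), π k))
        = (Prod.swap ∘ (MeasurableEquiv.piFinSuccAbove (fun _ : Fin (k+1) => Fin m → ℝ)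
            (Fin.last k))) ∘ (fun (π : ℕ → Fin m → ℝ) (i : Fin (k+1)) => π i) := by
      funext π
      simp only [Function.comp_apply, MeasurableEquiv.piFinSuccAbove, Fin.insertNthEquiv_last,
        MeasurableEquiv.coe_mk, Fin.snocEquiv_symm_apply, Prod.swap_prod_mk, Fin.val_last]
      rfl
    rw [h1, ← Measure.map_map (measurable_swap.comp (MeasurableEquiv.measurable _)) (hproj (k+1)),
      map_proj μ Pinf hPinf (k+1),
      ← Measure.map_map measurable_swap (MeasurableEquiv.measurable _), hφ.map_eq,
      Measure.prod_swap]
  have hg : StronglyMeasurable fun y : Fin k → Fin m → ℝ => ∫ d, H (y, d) ∂μ :=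
    hH.stronglyMeasurable.integral_prod_right'
  have hint : Integrable H ((Measure.pi fun _ : Fin k => μ).prod μ) :=
    ⟨hH.aestronglyMeasurable, HasFiniteIntegral.of_bounded (C := C)
      (Eventually.of_forall fun p => by simpa [Real.norm_eq_abs] using hC p)⟩
  calc ∫ π, H (fun i : Fin k => π i, π k) ∂Pinf
      = ∫ p, H p ∂((Measure.pi fun _ : Fin k => μ).prod μ) := by
        rw [← hmap2, integral_map hpair.aemeasurable
          (by rw [hmap2]; exact hH.aestronglyMeasurable)]
    _ = ∫ y, ∫ d, H (y, d) ∂μ ∂(Measure.pi fun _ : Fin k => μ) := integral_prod _ hint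
    _ = ∫ π, ∫ d, H (fun i : Fin k => π i, d) ∂μ ∂Pinf := by
        rw [← map_proj μ Pinf hPinf k, integral_map (hproj k).aemeasurable
          (by rw [map_proj μ Pinf hPinf k]; exact hg.aestronglyMeasurable)]

theorem main {n m : ℕ}
    (f : (Fin n → ℝ) → (Fin m → ℝ) → (Fin n → ℝ))
    (hf : Measurable fun p : (Fin n → ℝ) × (Fin m → ℝ) => f p.1 p.2)
    (D : Set (Fin m → ℝ)) (hD : MeasurableSet D)
    (μ : Measure (Fin m → ℝ)) [IsProbabilityMeasure μ] (hμD : μ D = 1)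
    (Pinf : Measure (ℕ → Fin m → ℝ)) [IsProbabilityMeasure Pinf]
    (hPinf : ∀ (s : Finset ℕ) (B : ℕ → Set (Fin m → ℝ)), (∀ i, MeasurableSet (B i)) →
      Pinf {π : ℕ → Fin m → ℝ | ∀ i ∈ s, π i ∈ B i} = ∏ i ∈ s, μ (B i))
    (X Xhat : Set (Fin n → ℝ))
    (hX : MeasurableSet X) (hXhat : MeasurableSet Xhat)
    (hXXhat : X ⊆ Xhat)
    (hreach : ∀ x ∈ X, ∀ d ∈ D, f x d ∈ Xhat)
    (v w : (Fin n → ℝ) → ℝ) (hv : Measurable v) (hw : Measurable w)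
    (hvb : ∃ C, ∀ x ∈ Xhat, |v x| ≤ C) (hwb : ∃ C, ∀ x ∈ Xhat, |w x| ≤ C)
    (h2 : ∀ x ∈ X, v x ≤ ∫ d in D, v (f x d) ∂μ)
    (h3 : ∀ x ∈ X, v x ≤ (∫ d in D, w (f x d) ∂μ) - w x)
    (h4 : ∀ x ∈ Xhat \ X, v x ≤ 1)
    (x0 : Fin n → ℝ) (hx0 : x0 ∈ X) :
    v x0 ≤ (Pinf {π : ℕ → Fin m → ℝ |
        ∃ k : ℕ, traj f x0 π k ∈ Xhat \ X ∧ ∀ i < k, traj f x0 π i ∈ X}).toReal := by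
  classical
  obtain ⟨Cv, hCv⟩ := hvb
  obtain ⟨Cw, hCw⟩ := hwb
  have hCv0 : 0 ≤ Cv := (abs_nonneg _).trans (hCv x0 (hXXhat hx0))
  have hCw0 : 0 ≤ Cw := (abs_nonneg _).trans (hCw x0 (hXXhat hx0))
  have tm : ∀ k, Measurable fun π : ℕ → Fin m → ℝ => traj f x0 π k := traj_measurable hf x0
  set A : ℕ → Set (ℕ → Fin m → ℝ) := fun k => {π | ∀ i ≤ k, traj f x0 π i ∈ X} with hAdef
  have hA : ∀ k, MeasurableSet (A k) := by
    intro k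
    have h : A k = ⋂ i ∈ {i : ℕ | i ≤ k}, (fun π => traj f x0 π i) ⁻¹' X := by
      ext π; simp [hAdef]
    rw [h]
    exact MeasurableSet.biInter (Set.to_countable _) fun i _ => (tm i) hX
  have hAmono : ∀ k, A (k+1) ⊆ A k := fun k π h i hi => h i (hi.trans (Nat.le_succ k))
  have hAmem : ∀ k (π : ℕ → Fin m → ℝ), π ∈ A k → traj f x0 π k ∈ X := fun k π h => h k le_rfl
  set Exit : ℕ → Set (ℕ → Fin m → ℝ) := fun k =>
    {π | ∃ j ≤ k, traj f x0 π j ∈ Xhat \ X ∧ ∀ i < j, traj f x0 π i ∈ X} with hExitdef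
  set Einf : Set (ℕ → Fin m → ℝ) :=
    {π | ∃ k : ℕ, traj f x0 π k ∈ Xhat \ X ∧ ∀ i < k, traj f x0 π i ∈ X} with hEinfdef
  have hEinfm : MeasurableSet Einf := einf_measurable hf x0 hX hXhat
  -- a.e. all coordinates lie in D
  have hDall : ∀ᵐ π ∂Pinf, ∀ i : ℕ, π i ∈ D := by
    rw [ae_all_iff]
    intro i
    have h1' : Pinf {π : ℕ → Fin m → ℝ | ∀ j ∈ ({i} : Finset ℕ), π j ∈ D} = 1 := by
      rw [hPinf {i} (fun _ => D) (fun _ => hD)]; simp [hμD]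
    have h2' : Pinf {π : ℕ → Fin m → ℝ | π i ∈ D} = 1 := by
      rw [← h1']; congr 1; ext π; simp
    have h3' := (prob_compl_eq_zero_iff ((measurable_pi_apply i) hD)).2 h2'
    rw [ae_iff]
    exact h3'
  have haeXhat : ∀ k, ∀ᵐ π ∂Pinf, π ∈ A k → traj f x0 π (k+1) ∈ Xhat := by
    intro k
    filter_upwards [hDall] with π hπD hπA
    rw [traj_succ]
    exact hreach _ (hAmem k π hπA) _ (hπD k)
  have haeDiff : ∀ k, ∀ᵐ π ∂Pinf, π ∈ A k \ A (k+1) → traj f x0 π (k+1) ∈ Xhat \ X := by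
    intro k
    filter_upwards [haeXhat k] with π hh hπ
    refine ⟨hh hπ.1, ?_⟩
    intro hmem
    exact hπ.2 (fun i hi => (Nat.of_le_succ hi).elim (fun h' => hπ.1 i h')
      (fun h' => by rw [h']; exact hmem))
  -- integrability helpers
  have intOn : ∀ (F : (ℕ → Fin m → ℝ) → ℝ), AEStronglyMeasurable F Pinf →
      ∀ (s : Set (ℕ → Fin m → ℝ)), MeasurableSet s → ∀ C : ℝ,
      (∀ᵐ π ∂Pinf, π ∈ s → |F π| ≤ C) → IntegrableOn F s Pinf := by
    intro F hF s hs C hb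
    refine ⟨hF.restrict, HasFiniteIntegral.of_bounded (C := C) ?_⟩
    rw [ae_restrict_iff' hs]
    filter_upwards [hb] with π hπ hπs
    simpa [Real.norm_eq_abs] using hπ hπs
  have habs : ∀ (F : (ℕ → Fin m → ℝ) → ℝ) (s : Set (ℕ → Fin m → ℝ)), MeasurableSet s →
      ∀ C : ℝ, 0 ≤ C → (∀ᵐ π ∂Pinf, π ∈ s → |F π| ≤ C) → |∫ π in s, F π ∂Pinf| ≤ C := by
    intro F s hs C hC0 hb
    have h1' : ∀ᵐ π ∂Pinf.restrict s, ‖F π‖ ≤ C := by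
      rw [ae_restrict_iff' hs]
      filter_upwards [hb] with π hπ hπs
      simpa [Real.norm_eq_abs] using hπ hπs
    have h2' := norm_integral_le_of_norm_le_const (μ := Pinf.restrict s) h1'
    rw [measureReal_def, Measure.restrict_apply_univ] at h2'
    have h3' : (Pinf s).toReal ≤ 1 := by
      simpa using ENNReal.toReal_mono ENNReal.one_ne_top (prob_le_one (μ := Pinf) (s := s))
    calc |∫ π in s, F π ∂Pinf| ≤ C * (Pinf s).toReal := by
          simpa [Real.norm_eq_abs] using h2'
      _ ≤ C * 1 := mul_le_mul_of_nonneg_left h3' hC0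
      _ = C := mul_one C
  have hVm : ∀ k, Measurable fun π : ℕ → Fin m → ℝ => v (traj f x0 π k) :=
    fun k => hv.comp (tm k)
  have hWm : ∀ k, Measurable fun π : ℕ → Fin m → ℝ => w (traj f x0 π k) :=
    fun k => hw.comp (tm k)
  have hIVm : ∀ (g : (Fin n → ℝ) → ℝ), Measurable g → ∀ k, AEStronglyMeasurable
      (fun π : ℕ → Fin m → ℝ => ∫ d in D, g (f (traj f x0 π k) d) ∂μ) Pinf := by
    intro g hg k
    have hsm : StronglyMeasurable fun p : (ℕ → Fin m → ℝ) × (Fin m → ℝ) =>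
        g (f (traj f x0 p.1 k) p.2) :=
      (hg.comp (hf.comp (((tm k).comp measurable_fst).prodMk measurable_snd))).stronglyMeasurable
    exact (hsm.integral_prod_right' (ν := μ.restrict D)).aestronglyMeasurable
  have hIbound : ∀ (g : (Fin n → ℝ) → ℝ) (Cg : ℝ), (∀ x ∈ Xhat, |g x| ≤ Cg) →
      ∀ k (π : ℕ → Fin m → ℝ), π ∈ A k → |∫ d in D, g (f (traj f x0 π k) d) ∂μ| ≤ Cg := by
    intro g Cg hCg k π hπ
    have hb : ∀ᵐ d ∂μ.restrict D, ‖g (f (traj f x0 π k) d)‖ ≤ Cg := by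
      rw [ae_restrict_iff' hD]
      exact Eventually.of_forall fun d hd => by
        simpa [Real.norm_eq_abs] using hCg _ (hreach _ (hAmem k π hπ) d hd)
    have hb2 := norm_integral_le_of_norm_le_const (μ := μ.restrict D) hb
    rw [measureReal_def, Measure.restrict_apply_univ, hμD] at hb2
    simpa [Real.norm_eq_abs] using hb2
  have iV : ∀ k, IntegrableOn (fun π => v (traj f x0 π k)) (A k) Pinf := fun k =>
    intOn _ (hVm k).aestronglyMeasurable _ (hA k) Cv
      (Eventually.of_forall fun π hπ => hCv _ (hXXhat (hAmem k π hπ)))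
  have iW : ∀ k, IntegrableOn (fun π => w (traj f x0 π k)) (A k) Pinf := fun k =>
    intOn _ (hWm k).aestronglyMeasurable _ (hA k) Cw
      (Eventually.of_forall fun π hπ => hCw _ (hXXhat (hAmem k π hπ)))
  have iV' : ∀ k, IntegrableOn (fun π => v (traj f x0 π (k+1))) (A k) Pinf := fun k =>
    intOn _ (hVm (k+1)).aestronglyMeasurable _ (hA k) Cv
      ((haeXhat k).mono fun π hh hπ => hCv _ (hh hπ))
  have iW' : ∀ k, IntegrableOn (fun π => w (traj f x0 π (k+1))) (A k) Pinf := fun k =>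
    intOn _ (hWm (k+1)).aestronglyMeasurable _ (hA k) Cw
      ((haeXhat k).mono fun π hh hπ => hCw _ (hh hπ))
  have iIV : ∀ k, IntegrableOn (fun π => ∫ d in D, v (f (traj f x0 π k) d) ∂μ) (A k) Pinf :=
    fun k => intOn _ (hIVm v hv k) _ (hA k) Cv
      (Eventually.of_forall fun π hπ => hIbound v Cv hCv k π hπ)
  have iIW : ∀ k, IntegrableOn (fun π => ∫ d in D, w (f (traj f x0 π k) d) ∂μ) (A k) Pinf :=
    fun k => intOn _ (hIVm w hw k) _ (hA k) Cw
      (Eventually.of_forall fun π hπ => hIbound w Cw hCw k π hπ)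
  -- the martingale step identity
  have step : ∀ (g : (Fin n → ℝ) → ℝ), Measurable g → ∀ Cg : ℝ,
      (∀ x ∈ Xhat, |g x| ≤ Cg) → ∀ k,
      ∫ π in A k, g (traj f x0 π (k+1)) ∂Pinf
        = ∫ π in A k, (∫ d in D, g (f (traj f x0 π k) d) ∂μ) ∂Pinf := by
    intro g hg Cg hCg k
    set emb : (Fin k → Fin m → ℝ) → (ℕ → Fin m → ℝ) :=
      fun y i => if h : i < k then y ⟨i, h⟩ else 0 with hembdef
    have hembm : Measurable emb := by
      apply measurable_pi_lambda
      intro i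
      by_cases h : i < k
      · simp only [hembdef, dif_pos h]
        exact measurable_pi_apply _
      · simp only [hembdef, dif_neg h]
        exact measurable_const
    have hembagree : ∀ (π : ℕ → Fin m → ℝ) i, i ≤ k →
        traj f x0 (emb (fun j : Fin k => π j)) i = traj f x0 π i := by
      intro π i hik
      apply traj_congr
      intro j hj
      simp only [hembdef]
      rw [dif_pos (lt_of_lt_of_le hj hik)]
    set A' : Set (Fin k → Fin m → ℝ) := {y | ∀ i ≤ k, traj f x0 (emb y) i ∈ X} with hA'def
    have hA'm : MeasurableSet A' := by
      have h : A' = ⋂ i ∈ {i : ℕ | i ≤ k}, (fun y => traj f x0 (emb y) i) ⁻¹' X := by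
        ext y; simp [hA'def]
      rw [h]
      exact MeasurableSet.biInter (Set.to_countable _) fun i _ => ((tm i).comp hembm) hX
    have hA'iff : ∀ π : ℕ → Fin m → ℝ, ((fun i : Fin k => π i) ∈ A') ↔ π ∈ A k := by
      intro π
      constructor
      · intro h i hik
        rw [← hembagree π i hik]
        exact h i hik
      · intro h i hik
        rw [hembagree π i hik]
        exact h i hik
    set F : (Fin k → Fin m → ℝ) × (Fin m → ℝ) → ℝ :=
      fun p => g (f (traj f x0 (emb p.1) k) p.2) with hFdef
    set H := (A' ×ˢ D).indicator F with hHdef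
    have hFm : Measurable F :=
      hg.comp (hf.comp ((((tm k).comp hembm).comp measurable_fst).prodMk measurable_snd))
    have hHm : Measurable H := hFm.indicator (hA'm.prod hD)
    have hHb : ∀ p, |H p| ≤ max Cg 0 := by
      intro p
      by_cases hp : p ∈ A' ×ˢ D
      · rw [hHdef, Set.indicator_of_mem hp]
        exact le_max_of_le_left (hCg _ (hreach _ (hp.1 k le_rfl) _ hp.2))
      · rw [hHdef, Set.indicator_of_notMem hp]
        simp [le_max_iff]
    have hkey := key_lemma μ Pinf hPinf k H hHm (max Cg 0) hHb
    have hLHS : ∫ π, H (fun i : Fin k => π i, π k) ∂Pinf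
        = ∫ π in A k, g (traj f x0 π (k+1)) ∂Pinf := by
      rw [← integral_indicator (hA k)]
      apply integral_congr_ae
      filter_upwards [hDall] with π hπD
      by_cases hπ : π ∈ A k
      · rw [hHdef, Set.indicator_of_mem (Set.mk_mem_prod ((hA'iff π).2 hπ) (hπD k)),
          Set.indicator_of_mem hπ]
        simp only [hFdef]
        rw [hembagree π k le_rfl, traj_succ]
      · rw [hHdef, Set.indicator_of_notMem (fun hmem => hπ ((hA'iff π).1 hmem.1)),
          Set.indicator_of_notMem hπ]
    have hRHS : ∫ π, ∫ d, H (fun i : Fin k => π i, d) ∂μ ∂Pinf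
        = ∫ π in A k, (∫ d in D, g (f (traj f x0 π k) d) ∂μ) ∂Pinf := by
      rw [← integral_indicator (hA k)]
      apply integral_congr_ae
      apply Eventually.of_forall
      intro π
      by_cases hπ : π ∈ A k
      · rw [Set.indicator_of_mem hπ]
        have heq : ∀ d, H (fun i : Fin k => π i, d)
            = D.indicator (fun d => g (f (traj f x0 π k) d)) d := by
          intro d
          by_cases hd : d ∈ D
          · rw [hHdef, Set.indicator_of_mem (Set.mk_mem_prod ((hA'iff π).2 hπ) hd),
              Set.indicator_of_mem hd]
            simp only [hFdef]
            rw [hembagree π k le_rfl]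
          · rw [hHdef, Set.indicator_of_notMem (fun hmem => hd hmem.2),
              Set.indicator_of_notMem hd]
        simp_rw [heq]
        exact integral_indicator hD
      · rw [Set.indicator_of_notMem hπ]
        have heq : ∀ d, H (fun i : Fin k => π i, d) = 0 := fun d =>
          Set.indicator_of_notMem (fun hmem => hπ ((hA'iff π).1 hmem.1)) _
        simp_rw [heq]
        simp
    rw [← hLHS, hkey, hRHS]
  -- splitting a set integral over A k
  have hsplit : ∀ k (F : (ℕ → Fin m → ℝ) → ℝ), IntegrableOn F (A k) Pinf →
      ∫ π in A k, F π ∂Pinf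
        = (∫ π in A (k+1), F π ∂Pinf) + ∫ π in A k \ A (k+1), F π ∂Pinf := by
    intro k F hF
    have hdisj : Disjoint (A (k+1)) (A k \ A (k+1)) :=
      Set.disjoint_left.2 fun π h1' h2' => h2'.2 h1'
    rw [← setIntegral_union hdisj ((hA k).diff (hA (k+1)))
      (hF.mono_set (hAmono k)) (hF.mono_set Set.diff_subset), Set.union_diff_cancel (hAmono k)]
  -- Claim 1 : submartingale inequality
  have claim1 : ∀ k, v x0 ≤ (∫ π in A k, v (traj f x0 π k) ∂Pinf) + (Pinf (Exit k)).toReal := by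
    intro k
    induction k with
    | zero =>
      have hA0 : A 0 = Set.univ := by
        ext π
        simp only [hAdef, Set.mem_setOf_eq, Set.mem_univ, iff_true]
        intro i hi
        obtain rfl := Nat.le_zero.mp hi
        exact hx0
      have hint0 : ∫ π in A 0, v (traj f x0 π 0) ∂Pinf = v x0 := by
        rw [hA0, Measure.restrict_univ]
        show ∫ _π, v x0 ∂Pinf = v x0
        simp
      rw [hint0]
      have := ENNReal.toReal_nonneg (a := Pinf (Exit 0))
      linarith
    | succ k ih =>
      have hdiffm : MeasurableSet (A k \ A (k+1)) := (hA k).diff (hA (k+1))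
      have s1 : ∫ π in A k, v (traj f x0 π k) ∂Pinf
          ≤ ∫ π in A k, (∫ d in D, v (f (traj f x0 π k) d) ∂μ) ∂Pinf :=
        setIntegral_mono_on (iV k) (iIV k) (hA k) (fun π hπ => h2 _ (hAmem k π hπ))
      have s2 : ∫ π in A k, (∫ d in D, v (f (traj f x0 π k) d) ∂μ) ∂Pinf
          = ∫ π in A k, v (traj f x0 π (k+1)) ∂Pinf := (step v hv Cv hCv k).symm
      have s3 := hsplit k _ (iV' k)
      have s4 : ∫ π in A k \ A (k+1), v (traj f x0 π (k+1)) ∂Pinf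
          ≤ (Pinf (A k \ A (k+1))).toReal := by
        have hc : ∫ π in A k \ A (k+1), v (traj f x0 π (k+1)) ∂Pinf
            ≤ ∫ _π in A k \ A (k+1), (1:ℝ) ∂Pinf := by
          apply setIntegral_mono_on_ae ((iV' k).mono_set Set.diff_subset)
            (integrableOn_const (measure_ne_top _ _)) hdiffm
          filter_upwards [haeDiff k] with π hh hπ
          exact h4 _ (hh hπ)
        have hc2 : ∫ _π in A k \ A (k+1), (1:ℝ) ∂Pinf = (Pinf (A k \ A (k+1))).toReal := by
          rw [setIntegral_const, smul_eq_mul, mul_one, measureReal_def]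
        linarith
      have s5 : (Pinf (Exit k)).toReal + (Pinf (A k \ A (k+1))).toReal
          ≤ (Pinf (Exit (k+1))).toReal := by
        have hdisj : Disjoint (Exit k) (A k \ A (k+1)) := by
          rw [Set.disjoint_left]
          rintro π ⟨j, hjk, hj1, -⟩ hπA
          exact hj1.2 (hπA.1 j hjk)
        have hnull : Pinf {π : ℕ → Fin m → ℝ | ∀ i : ℕ, π i ∈ D}ᶜ = 0 := by
          have := ae_iff.mp hDall
          exact this
        have hle : Pinf (Exit k) + Pinf (A k \ A (k+1)) ≤ Pinf (Exit (k+1)) := by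
          rw [← measure_union hdisj hdiffm]
          have hsub : Exit k ∪ (A k \ A (k+1))
              ⊆ Exit (k+1) ∪ {π : ℕ → Fin m → ℝ | ∀ i : ℕ, π i ∈ D}ᶜ := by
            rintro π (hπ | hπ)
            · obtain ⟨j, hjk, h1', h2'⟩ := hπ
              exact Or.inl ⟨j, hjk.trans (Nat.le_succ k), h1', h2'⟩
            · by_cases hπD : ∀ i : ℕ, π i ∈ D
              · refine Or.inl ⟨k+1, le_rfl, ⟨?_, ?_⟩, ?_⟩
                · rw [traj_succ]
                  exact hreach _ (hAmem k π hπ.1) _ (hπD k)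
                · intro hmem
                  exact hπ.2 fun i hi => (Nat.of_le_succ hi).elim (hπ.1 i)
                    (fun h' => by rw [h']; exact hmem)
                · intro i hi
                  exact hπ.1 i (Nat.lt_succ_iff.mp hi)
              · exact Or.inr hπD
          calc Pinf (Exit k ∪ (A k \ A (k+1)))
              ≤ Pinf (Exit (k+1) ∪ {π : ℕ → Fin m → ℝ | ∀ i : ℕ, π i ∈ D}ᶜ) :=
                measure_mono hsub
            _ ≤ Pinf (Exit (k+1)) + Pinf {π : ℕ → Fin m → ℝ | ∀ i : ℕ, π i ∈ D}ᶜ :=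
                measure_union_le _ _
            _ = Pinf (Exit (k+1)) := by rw [hnull, add_zero]
        calc (Pinf (Exit k)).toReal + (Pinf (A k \ A (k+1))).toReal
            = (Pinf (Exit k) + Pinf (A k \ A (k+1))).toReal :=
              (ENNReal.toReal_add (measure_ne_top _ _) (measure_ne_top _ _)).symm
          _ ≤ (Pinf (Exit (k+1))).toReal :=
              ENNReal.toReal_mono (measure_ne_top _ _) hle
      linarith
  -- Claim 2 : drift bound
  have claim2 : ∀ k, ∫ π in A k, v (traj f x0 π k) ∂Pinf
      ≤ (∫ π in A (k+1), w (traj f x0 π (k+1)) ∂Pinf)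
        - (∫ π in A k, w (traj f x0 π k) ∂Pinf)
        + Cw * ((Pinf (A k)).toReal - (Pinf (A (k+1))).toReal) := by
    intro k
    have hdiffm : MeasurableSet (A k \ A (k+1)) := (hA k).diff (hA (k+1))
    have hdtoReal : (Pinf (A k \ A (k+1))).toReal
        = (Pinf (A k)).toReal - (Pinf (A (k+1))).toReal := by
      rw [measure_diff (hAmono k) (hA (k+1)).nullMeasurableSet (measure_ne_top _ _),
        ENNReal.toReal_sub_of_le (measure_mono (hAmono k)) (measure_ne_top _ _)]
    have s1 : ∫ π in A k, v (traj f x0 π k) ∂Pinf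
        ≤ ∫ π in A k, ((∫ d in D, w (f (traj f x0 π k) d) ∂μ) - w (traj f x0 π k)) ∂Pinf :=
      setIntegral_mono_on (iV k) ((iIW k).sub (iW k)) (hA k) (fun π hπ => h3 _ (hAmem k π hπ))
    have s2 : ∫ π in A k, ((∫ d in D, w (f (traj f x0 π k) d) ∂μ) - w (traj f x0 π k)) ∂Pinf
        = (∫ π in A k, (∫ d in D, w (f (traj f x0 π k) d) ∂μ) ∂Pinf)
          - ∫ π in A k, w (traj f x0 π k) ∂Pinf := integral_sub (iIW k) (iW k)
    have s3 : ∫ π in A k, (∫ d in D, w (f (traj f x0 π k) d) ∂μ) ∂Pinf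
        = ∫ π in A k, w (traj f x0 π (k+1)) ∂Pinf := (step w hw Cw hCw k).symm
    have s4 := hsplit k _ (iW' k)
    have s5 : ∫ π in A k \ A (k+1), w (traj f x0 π (k+1)) ∂Pinf
        ≤ Cw * (Pinf (A k \ A (k+1))).toReal := by
      have hc : ∫ π in A k \ A (k+1), w (traj f x0 π (k+1)) ∂Pinf
          ≤ ∫ _π in A k \ A (k+1), Cw ∂Pinf := by
        apply setIntegral_mono_on_ae ((iW' k).mono_set Set.diff_subset)
          (integrableOn_const (measure_ne_top _ _)) hdiffm
        filter_upwards [haeXhat k] with π hh hπ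
        exact (abs_le.mp (hCw _ (hh hπ.1))).2
      rw [setIntegral_const, smul_eq_mul, mul_comm] at hc
      exact hc
    rw [← hdtoReal]
    linarith
  -- summing claim 2
  have sumbound : ∀ N : ℕ, ∑ k ∈ Finset.range N, ∫ π in A k, v (traj f x0 π k) ∂Pinf
      ≤ 3 * Cw := by
    intro N
    have h1' : ∑ k ∈ Finset.range N, ∫ π in A k, v (traj f x0 π k) ∂Pinf
        ≤ ∑ k ∈ Finset.range N, (((∫ π in A (k+1), w (traj f x0 π (k+1)) ∂Pinf)
            - (∫ π in A k, w (traj f x0 π k) ∂Pinf))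
            + Cw * ((Pinf (A k)).toReal - (Pinf (A (k+1))).toReal)) :=
      Finset.sum_le_sum fun k _ => claim2 k
    rw [Finset.sum_add_distrib,
      Finset.sum_range_sub (fun k => ∫ π in A k, w (traj f x0 π k) ∂Pinf),
      ← Finset.mul_sum, Finset.sum_range_sub' (fun k => (Pinf (A k)).toReal)] at h1'
    have hbN : |∫ π in A N, w (traj f x0 π N) ∂Pinf| ≤ Cw :=
      habs _ _ (hA N) Cw hCw0 (Eventually.of_forall fun π hπ => hCw _ (hXXhat (hAmem N π hπ)))
    have hb0 : |∫ π in A 0, w (traj f x0 π 0) ∂Pinf| ≤ Cw :=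
      habs _ _ (hA 0) Cw hCw0 (Eventually.of_forall fun π hπ => hCw _ (hXXhat (hAmem 0 π hπ)))
    have hq0 : (Pinf (A 0)).toReal ≤ 1 := by
      simpa using ENNReal.toReal_mono ENNReal.one_ne_top (prob_le_one (μ := Pinf) (s := A 0))
    have hqN : 0 ≤ (Pinf (A N)).toReal := ENNReal.toReal_nonneg
    have habs1 := abs_le.mp hbN
    have habs2 := abs_le.mp hb0
    have hmul : Cw * ((Pinf (A 0)).toReal - (Pinf (A N)).toReal) ≤ Cw * 1 :=
      mul_le_mul_of_nonneg_left (by linarith) hCw0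
    linarith
  -- conclusion
  have hExitEinf : ∀ k, (Pinf (Exit k)).toReal ≤ (Pinf Einf).toReal := by
    intro k
    refine ENNReal.toReal_mono (measure_ne_top _ _) (measure_mono ?_)
    intro π hπ
    obtain ⟨j, -, h1', h2'⟩ := hπ
    exact ⟨j, h1', h2'⟩
  have hlow : ∀ k, v x0 - (Pinf Einf).toReal ≤ ∫ π in A k, v (traj f x0 π k) ∂Pinf := by
    intro k
    have := claim1 k
    have := hExitEinf k
    linarith
  by_contra hcon
  push_neg at hcon
  have hδ : 0 < v x0 - (Pinf Einf).toReal := by linarith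
  obtain ⟨N, hN⟩ := exists_nat_gt (3 * Cw / (v x0 - (Pinf Einf).toReal))
  have hub : (N : ℝ) * (v x0 - (Pinf Einf).toReal) ≤ 3 * Cw := by
    have hs : ∑ _k ∈ Finset.range N, (v x0 - (Pinf Einf).toReal)
        ≤ ∑ k ∈ Finset.range N, ∫ π in A k, v (traj f x0 π k) ∂Pinf :=
      Finset.sum_le_sum fun k _ => hlow k
    rw [Finset.sum_const, Finset.card_range, nsmul_eq_mul] at hs
    exact hs.trans (sumbound N)
  rw [div_lt_iff₀ hδ] at hN
  linarith

end Statement10Aux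

/-- Proposition 6: equation-relaxation certificate upper-bounds the
liveness probability. -/
theorem statement_10 {n m : ℕ}
    (f : (Fin n → ℝ) → (Fin m → ℝ) → (Fin n → ℝ))
    (hf : Measurable fun p : (Fin n → ℝ) × (Fin m → ℝ) => f p.1 p.2)
    (D : Set (Fin m → ℝ)) (hD : MeasurableSet D)
    (μ : Measure (Fin m → ℝ)) [IsProbabilityMeasure μ] (hμD : μ D = 1)
    (Pinf : Measure (ℕ → Fin m → ℝ)) [IsProbabilityMeasure Pinf]
    (hPinf : ∀ (s : Finset ℕ) (B : ℕ → Set (Fin m → ℝ)), (∀ i, MeasurableSet (B i)) →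
      Pinf {π : ℕ → Fin m → ℝ | ∀ i ∈ s, π i ∈ B i} = ∏ i ∈ s, μ (B i))
    (X X0 Xhat : Set (Fin n → ℝ))
    (hX : MeasurableSet X) (hX0 : MeasurableSet X0) (hXhat : MeasurableSet Xhat)
    (hX0X : X0 ⊆ X) (hXXhat : X ⊆ Xhat)
    (hreach : ∀ x ∈ X, ∀ d ∈ D, f x d ∈ Xhat)
    (ε₂ : ℝ) (hε₂ : ε₂ ∈ Set.Icc (0 : ℝ) 1)
    (v w : (Fin n → ℝ) → ℝ) (hv : Measurable v) (hw : Measurable w)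
    (hvb : ∃ C, ∀ x ∈ Xhat, |v x| ≤ C) (hwb : ∃ C, ∀ x ∈ Xhat, |w x| ≤ C)
    (h1 : ∀ x ∈ X0, 1 - ε₂ ≤ v x)
    (h2 : ∀ x ∈ X, v x ≤ ∫ d in D, v (f x d) ∂μ)
    (h3 : ∀ x ∈ X, v x ≤ (∫ d in D, w (f x d) ∂μ) - w x)
    (h4 : ∀ x ∈ Xhat \ X, v x ≤ 1) :
    (∀ x0 ∈ X,
      v x0 ≤ (Pinf {π : ℕ → Fin m → ℝ |
          ∃ k : ℕ, traj f x0 π k ∈ Xhat \ X ∧ ∀ i < k, traj f x0 π i ∈ X}).toReal) ∧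
    ∀ x0 ∈ X0,
      1 - ε₂ ≤ (Pinf {π : ℕ → Fin m → ℝ |
          ∃ k : ℕ, traj f x0 π k ∈ Xhat \ X ∧ ∀ i < k, traj f x0 π i ∈ X}).toReal ∧
      (Pinf {π : ℕ → Fin m → ℝ | ∀ k : ℕ, traj f x0 π k ∈ X}).toReal ≤ ε₂ := by
  have hmain : ∀ x0 ∈ X,
      v x0 ≤ (Pinf {π : ℕ → Fin m → ℝ |
          ∃ k : ℕ, traj f x0 π k ∈ Xhat \ X ∧ ∀ i < k, traj f x0 π i ∈ X}).toReal :=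
    fun x0 hx0 => Statement10Aux.main f hf D hD μ hμD Pinf hPinf X Xhat hX hXhat hXXhat
      hreach v w hv hw hvb hwb h2 h3 h4 x0 hx0
  refine ⟨hmain, ?_⟩
  intro x0 hx0
  have hx0X : x0 ∈ X := hX0X hx0
  have hge : 1 - ε₂ ≤ (Pinf {π : ℕ → Fin m → ℝ |
      ∃ k : ℕ, traj f x0 π k ∈ Xhat \ X ∧ ∀ i < k, traj f x0 π i ∈ X}).toReal :=
    (h1 x0 hx0).trans (hmain x0 hx0X)
  refine ⟨hge, ?_⟩
  set Einf : Set (ℕ → Fin m → ℝ) :=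
    {π : ℕ → Fin m → ℝ | ∃ k : ℕ, traj f x0 π k ∈ Xhat \ X ∧ ∀ i < k, traj f x0 π i ∈ X}
    with hEinfdef
  have hEinfm : MeasurableSet Einf := Statement10Aux.einf_measurable hf x0 hX hXhat
  have hsub : {π : ℕ → Fin m → ℝ | ∀ k : ℕ, traj f x0 π k ∈ X} ⊆ Einfᶜ := by
    intro π hπ hmem
    obtain ⟨k, hk1, -⟩ := hmem
    exact hk1.2 (hπ k)
  have hle := measure_mono (μ := Pinf) hsub
  rw [prob_compl_eq_one_sub hEinfm] at hle
  have hne : (1 : ENNReal) - Pinf Einf ≠ ⊤ :=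
    ne_top_of_le_ne_top ENNReal.one_ne_top tsub_le_self
  have hle2 : (Pinf {π : ℕ → Fin m → ℝ | ∀ k : ℕ, traj f x0 π k ∈ X}).toReal
      ≤ ((1 : ENNReal) - Pinf Einf).toReal := ENNReal.toReal_mono hne hle
  rw [ENNReal.toReal_sub_of_le prob_le_one ENNReal.one_ne_top] at hle2
  simp only [ENNReal.toReal_one] at hle2
  linarith
end
end

section
/- Suppose v and u are real-valued functions that are twice continuously differentiable on an open neighborhood of cl(𝒳) and satisfy: 𝒜v(x) ≤ 0 for all x ∈ 𝒳; v(x) ≥ 𝒜u(x) for all x ∈ 𝒳; and v(x) ≥ 1 for all x ∈ ∂𝒳. Then v(x) ≥ 0 for all x ∈ cl(𝒳). (Consequently, the equation-relaxation constraint system for lower-bounding the liveness probability of the continuous-time system, which does not explicitly require nonnegativity of v, is equivalent to the classical supermartingale barrier-certificate constraint system, which does.) -/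
open MeasureTheory Filter Topology

noncomputable section

/-- The infinitesimal generator of the diffusion `dX = b(X)dt + σ(X)dW`:
`𝒜 f (x) = ⟨∇f(x), b(x)⟩ + (1/2)·tr(σ(x)ᵀ · (Hess f)(x) · σ(x))`.
Here `σ x i : Fin n → ℝ` is the `i`-th column of the diffusion matrix, so that
`σ(x)_{j i} = σ x i j`, the gradient pairing is `Df(x)[b(x)]`, and the Hessian entry
`H_{j k}` is the second directional derivative along coordinate directions `j, k`. -/
def generatorA {n m : ℕ} (b : (Fin n → ℝ) → Fin n → ℝ)
    (σ : (Fin n → ℝ) → Fin m → Fin n → ℝ) (f : (Fin n → ℝ) → ℝ) (x : Fin n → ℝ) : ℝ :=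
  fderiv ℝ f x (b x) +
    (1 / 2) * ∑ i : Fin m, ∑ j : Fin n, ∑ k : Fin n,
      σ x i j *
        fderiv ℝ (fun y => fderiv ℝ f y (Pi.single j (1 : ℝ))) x (Pi.single k (1 : ℝ)) *
        σ x i k

namespace Statement12Aux

open Set

variable {n : ℕ} {f : (Fin n → ℝ) → ℝ} {x : Fin n → ℝ}

/-- 1-D second derivative test (necessary direction): at a local min the second
derivative is nonnegative. -/
lemma second_nonneg {g g' : ℝ → ℝ} {L : ℝ}
    (hg : ∀ᶠ t in 𝓝 (0:ℝ), HasDerivAt g (g' t) t)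
    (hg' : HasDerivAt g' L 0) (hmin : IsLocalMin g 0) : 0 ≤ L := by
  by_contra hneg
  push_neg at hneg
  have hg'0 : g' 0 = 0 := by
    have h1 : deriv g 0 = g' 0 := hg.self_of_nhds.deriv
    have h2 : deriv g 0 = 0 := hmin.deriv_eq_zero
    rw [h1] at h2; exact h2
  -- slope of g' tends to L < 0
  have hslope : Tendsto (fun t => g' t / t) (𝓝[≠] (0:ℝ)) (𝓝 L) := by
    have := hasDerivAt_iff_tendsto_slope.mp hg'
    refine this.congr' ?_
    filter_upwards [self_mem_nhdsWithin] with t ht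
    simp [slope_def_field, hg'0]
  have hev : ∀ᶠ t in 𝓝[≠] (0:ℝ), g' t / t < 0 :=
    hslope.eventually (Iio_mem_nhds hneg)
  have hev' : ∀ᶠ t in 𝓝 (0:ℝ), t ≠ 0 → g' t / t < 0 :=
    eventually_nhdsWithin_iff.mp hev
  obtain ⟨δ, hδ, hball⟩ := Metric.eventually_nhds_iff.mp (hg.and (hmin.and hev'))
  set r := δ/2 with hr
  have hrpos : 0 < r := by positivity
  have hsub : ∀ t ∈ Ico (0:ℝ) r, dist t 0 < δ := by
    intro t ht
    rw [Real.dist_eq, sub_zero, abs_of_nonneg ht.1]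
    linarith [ht.2]
  have hanti : StrictAntiOn g (Ico (0:ℝ) r) := by
    apply strictAntiOn_of_deriv_neg (convex_Ico _ _)
    · intro t ht
      exact ((hball (hsub t ht)).1.continuousAt).continuousWithinAt
    · intro t ht
      rw [interior_Ico] at ht
      have h1 := hball (hsub t ⟨le_of_lt ht.1, ht.2⟩)
      rw [h1.1.deriv]
      have h3 := h1.2.2 (ne_of_gt ht.1)
      have hne : t ≠ 0 := ne_of_gt ht.1
      have : g' t = (g' t / t) * t := by field_simp
      nlinarith [ht.1]
  have hlt : g (r/2) < g 0 := by
    have h0 : (0:ℝ) ∈ Ico (0:ℝ) r := ⟨le_refl _, hrpos⟩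
    have h1 : r/2 ∈ Ico (0:ℝ) r := ⟨by positivity, by linarith⟩
    exact hanti h0 h1 (by positivity)
  have hge : g 0 ≤ g (r/2) := by
    have hd : dist (r/2) 0 < δ := by
      rw [Real.dist_eq, sub_zero, abs_of_pos (by positivity)]; linarith
    exact (hball hd).2.1
  linarith

lemma fderiv_fderiv_diff (hf : ContDiffAt ℝ 2 f x) :
    DifferentiableAt ℝ (fderiv ℝ f) x :=
  (hf.fderiv_right (m := 1) (by norm_num)).differentiableAt one_ne_zero

lemma inner_diff (hf : ContDiffAt ℝ 2 f x) (w : Fin n → ℝ) :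
    DifferentiableAt ℝ (fun y => fderiv ℝ f y w) x :=
  (ContinuousLinearMap.apply ℝ ℝ w).differentiableAt.comp x (fderiv_fderiv_diff hf)

lemma hess_repr (hf : ContDiffAt ℝ 2 f x) (w z : Fin n → ℝ) :
    fderiv ℝ (fun y => fderiv ℝ f y w) x z = (fderiv ℝ (fderiv ℝ f) x z) w := by
  have hd := fderiv_fderiv_diff hf
  have h := fderiv_clm_apply hd (differentiableAt_const w)
  rw [h]; simp

lemma pi_single_sum (d : Fin n → ℝ) :
    d = ∑ k : Fin n, d k • (Pi.single k 1 : Fin n → ℝ) := by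
  funext j
  simp [Pi.single_apply, Finset.sum_ite_eq' Finset.univ j]

/-- Expansion of the second directional derivative as the Hessian quadratic form. -/
lemma quad_expand (hf : ContDiffAt ℝ 2 f x) (d : Fin n → ℝ) :
    fderiv ℝ (fun y => fderiv ℝ f y d) x d
      = ∑ j : Fin n, ∑ k : Fin n,
          d j * fderiv ℝ (fun y => fderiv ℝ f y (Pi.single j (1:ℝ))) x (Pi.single k (1:ℝ)) * d k := by
  have hr := hess_repr hf
  rw [hr]
  simp only [hr]
  set B := fderiv ℝ (fderiv ℝ f) x with hB
  have h0 : ∀ (ℓ : (Fin n → ℝ) →L[ℝ] ℝ), ℓ d = ∑ j : Fin n, d j * ℓ (Pi.single j 1) := by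
    intro ℓ
    conv_lhs => rw [pi_single_sum d]
    rw [map_sum]
    simp [smul_eq_mul]
  have h1 : B d = ∑ k : Fin n, d k • B (Pi.single k 1) := by
    conv_lhs => rw [pi_single_sum d]
    rw [map_sum]
    simp
  rw [h1, ContinuousLinearMap.sum_apply]
  rw [Finset.sum_comm]
  refine Finset.sum_congr rfl fun k _ => ?_
  rw [ContinuousLinearMap.smul_apply, smul_eq_mul, h0 (B (Pi.single k 1)), Finset.mul_sum]
  refine Finset.sum_congr rfl fun j _ => ?_
  ring

/-- Nonnegativity of the second directional derivative at an (interior) local min. -/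
lemma quad_nonneg (hf : ∀ᶠ y in 𝓝 x, ContDiffAt ℝ 2 f y)
    (hmin : IsLocalMin f x) (d : Fin n → ℝ) :
    0 ≤ fderiv ℝ (fun y => fderiv ℝ f y d) x d := by
  set line : ℝ → (Fin n → ℝ) := fun t => x + t • d with hline
  have hline0 : line 0 = x := by simp [hline]
  have hlineC : Continuous line := by
    apply continuous_const.add (continuous_id.smul continuous_const)
  have hlineD : ∀ t : ℝ, HasDerivAt line d t := by
    intro t
    have := ((hasDerivAt_id t).smul_const d).const_add x
    simpa [hline] using this
  have hevC : ∀ᶠ t in 𝓝 (0:ℝ), ContDiffAt ℝ 2 f (line t) := by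
    have : Tendsto line (𝓝 0) (𝓝 x) := by
      rw [← hline0]; exact hlineC.continuousAt
    exact this.eventually hf
  have hg : ∀ᶠ t in 𝓝 (0:ℝ), HasDerivAt (f ∘ line) (fderiv ℝ f (line t) d) t := by
    filter_upwards [hevC] with t ht
    exact (ht.differentiableAt (by norm_num)).hasFDerivAt.comp_hasDerivAt t (hlineD t)
  have hfx : ContDiffAt ℝ 2 f x := hf.self_of_nhds
  have hFd : DifferentiableAt ℝ (fun y => fderiv ℝ f y d) x := inner_diff hfx d
  have hg' : HasDerivAt (fun t => fderiv ℝ f (line t) d)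
      (fderiv ℝ (fun y => fderiv ℝ f y d) x d) 0 := by
    have hFd' : HasFDerivAt (fun y => fderiv ℝ f y d)
        (fderiv ℝ (fun y => fderiv ℝ f y d) x) (line 0) := by
      rw [hline0]; exact hFd.hasFDerivAt
    exact hFd'.comp_hasDerivAt 0 (hlineD 0)
  have hmin' : IsLocalMin (f ∘ line) 0 := by
    apply IsLocalMin.comp_continuous _ hlineC.continuousAt
    rw [hline0]; exact hmin
  exact second_nonneg hg hg' hmin'

/-- The generator is nonnegative at an interior local minimum of a C² function. -/
lemma gen_nonneg {m : ℕ} (b : (Fin n → ℝ) → Fin n → ℝ) (σ : (Fin n → ℝ) → Fin m → Fin n → ℝ)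
    (hf : ∀ᶠ y in 𝓝 x, ContDiffAt ℝ 2 f y) (hmin : IsLocalMin f x) :
    0 ≤ generatorA b σ f x := by
  unfold generatorA
  have h1 : fderiv ℝ f x = 0 := hmin.fderiv_eq_zero
  rw [h1]
  simp only [ContinuousLinearMap.zero_apply, zero_add]
  have h2 : ∀ i : Fin m, 0 ≤ ∑ j : Fin n, ∑ k : Fin n,
      σ x i j * fderiv ℝ (fun y => fderiv ℝ f y (Pi.single j (1:ℝ))) x (Pi.single k (1:ℝ)) * σ x i k := by
    intro i
    rw [← quad_expand hf.self_of_nhds (σ x i)]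
    exact quad_nonneg hf hmin (σ x i)
  have : 0 ≤ ∑ i : Fin m, ∑ j : Fin n, ∑ k : Fin n,
      σ x i j * fderiv ℝ (fun y => fderiv ℝ f y (Pi.single j (1:ℝ))) x (Pi.single k (1:ℝ)) * σ x i k :=
    Finset.sum_nonneg fun i _ => h2 i
  linarith

/-- Linearity of the generator. -/
lemma gen_linear {m : ℕ} (b : (Fin n → ℝ) → Fin n → ℝ) (σ : (Fin n → ℝ) → Fin m → Fin n → ℝ)
    {u v : (Fin n → ℝ) → ℝ} (t : ℝ)
    (hu : ∀ᶠ y in 𝓝 x, ContDiffAt ℝ 2 u y) (hv : ∀ᶠ y in 𝓝 x, ContDiffAt ℝ 2 v y) :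
    generatorA b σ (fun y => u y + t * v y) x
      = generatorA b σ u x + t * generatorA b σ v x := by
  have hux : ContDiffAt ℝ 2 u x := hu.self_of_nhds
  have hvx : ContDiffAt ℝ 2 v x := hv.self_of_nhds
  have hfd : ∀ᶠ y in 𝓝 x, fderiv ℝ (fun y => u y + t * v y) y
      = fderiv ℝ u y + t • fderiv ℝ v y := by
    filter_upwards [hu, hv] with y hy1 hy2
    rw [fderiv_fun_add (hy1.differentiableAt (by norm_num))
        ((hy2.differentiableAt (by norm_num)).const_mul t)]
    rw [fderiv_const_mul (hy2.differentiableAt (by norm_num))]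
  have hfdx := hfd.self_of_nhds
  have hH : ∀ j k : Fin n,
      fderiv ℝ (fun y => fderiv ℝ (fun z => u z + t * v z) y (Pi.single j (1:ℝ))) x (Pi.single k (1:ℝ))
      = fderiv ℝ (fun y => fderiv ℝ u y (Pi.single j (1:ℝ))) x (Pi.single k (1:ℝ))
        + t * fderiv ℝ (fun y => fderiv ℝ v y (Pi.single j (1:ℝ))) x (Pi.single k (1:ℝ)) := by
    intro j k
    have hev : (fun y => fderiv ℝ (fun z => u z + t * v z) y (Pi.single j (1:ℝ)))
        =ᶠ[𝓝 x] fun y => fderiv ℝ u y (Pi.single j (1:ℝ)) + t * fderiv ℝ v y (Pi.single j (1:ℝ)) := by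
      filter_upwards [hfd] with y hy
      rw [hy]
      simp
    rw [hev.fderiv_eq]
    rw [fderiv_fun_add (inner_diff hux _) ((inner_diff hvx _).const_mul t)]
    rw [fderiv_const_mul (inner_diff hvx _)]
    simp
  unfold generatorA
  rw [hfdx]
  simp only [hH]
  simp only [ContinuousLinearMap.add_apply, ContinuousLinearMap.coe_smul', Pi.smul_apply,
    smul_eq_mul]
  have hs : ∑ i : Fin m, ∑ j : Fin n, ∑ k : Fin n,
      σ x i j * (fderiv ℝ (fun y => fderiv ℝ u y (Pi.single j (1:ℝ))) x (Pi.single k (1:ℝ))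
        + t * fderiv ℝ (fun y => fderiv ℝ v y (Pi.single j (1:ℝ))) x (Pi.single k (1:ℝ))) * σ x i k
      = (∑ i : Fin m, ∑ j : Fin n, ∑ k : Fin n,
          σ x i j * fderiv ℝ (fun y => fderiv ℝ u y (Pi.single j (1:ℝ))) x (Pi.single k (1:ℝ)) * σ x i k)
        + t * ∑ i : Fin m, ∑ j : Fin n, ∑ k : Fin n,
          σ x i j * fderiv ℝ (fun y => fderiv ℝ v y (Pi.single j (1:ℝ))) x (Pi.single k (1:ℝ)) * σ x i k := by
    rw [Finset.mul_sum, ← Finset.sum_add_distrib]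
    refine Finset.sum_congr rfl fun i _ => ?_
    rw [Finset.mul_sum, ← Finset.sum_add_distrib]
    refine Finset.sum_congr rfl fun j _ => ?_
    rw [Finset.mul_sum, ← Finset.sum_add_distrib]
    refine Finset.sum_congr rfl fun k _ => ?_
    ring
  rw [hs]
  ring

end Statement12Aux

/-- Lemma 2, continuous time: any solution of the relaxed equation
system for the continuous-time lower bound is automatically nonnegative on `cl(𝒳)`. -/
theorem statement_12 {n m : ℕ}
    (X : Set (Fin n → ℝ)) (hXne : X.Nonempty) (hXopen : IsOpen X)
    (hXbdd : Bornology.IsBounded X)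
    (b : (Fin n → ℝ) → Fin n → ℝ) (σ : (Fin n → ℝ) → Fin m → Fin n → ℝ)
    (hb : LocallyLipschitz b) (hσ : LocallyLipschitz σ)
    (v u : (Fin n → ℝ) → ℝ)
    (U : Set (Fin n → ℝ)) (hU : IsOpen U) (hclXU : closure X ⊆ U)
    (hv : ContDiffOn ℝ 2 v U) (hu : ContDiffOn ℝ 2 u U)
    (h1 : ∀ x ∈ X, generatorA b σ v x ≤ 0)
    (h2 : ∀ x ∈ X, generatorA b σ u x ≤ v x)
    (h3 : ∀ x ∈ frontier X, 1 ≤ v x) :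
    ∀ x ∈ closure X, 0 ≤ v x := by
  open Statement12Aux in
  by_contra hcon
  push_neg at hcon
  obtain ⟨x₁, hx₁K, hx₁v⟩ := hcon
  have hK : IsCompact (closure X) := hXbdd.isCompact_closure
  have hKne : (closure X).Nonempty := hXne.closure
  have hvK : ContinuousOn v (closure X) := (hv.continuousOn).mono hclXU
  have huK : ContinuousOn u (closure X) := (hu.continuousOn).mono hclXU
  obtain ⟨x₀, hx₀K, hx₀min⟩ := hK.exists_isMinOn hKne hvK
  set m₀ := v x₀ with hm₀
  have hm₀neg : m₀ < 0 := lt_of_le_of_lt (hx₀min hx₁K) hx₁v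
  obtain ⟨p, hpK, hpmax⟩ := hK.exists_isMaxOn hKne huK
  obtain ⟨q, hqK, hqmin⟩ := hK.exists_isMinOn hKne huK
  set C := u p - u q with hC
  have hCnn : 0 ≤ C := by
    have h' : u q ≤ u p := hqmin hpK
    simp only [hC]; linarith
  set t := (C + 1) / (-m₀) with ht
  have hm₀ne : -m₀ ≠ 0 := by linarith
  have htm : t * (-m₀) = C + 1 := by
    rw [ht]; exact div_mul_cancel₀ _ hm₀ne
  have htpos : 0 < t := by
    rw [ht]; apply div_pos <;> linarith
  set φ : (Fin n → ℝ) → ℝ := fun y => u y + t * v y with hφ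
  have hφK : ContinuousOn φ (closure X) := huK.add (continuousOn_const.mul hvK)
  obtain ⟨y₀, hy₀K, hy₀min⟩ := hK.exists_isMinOn hKne hφK
  have hφy₀x₀ : φ y₀ ≤ u x₀ + t * m₀ := hy₀min hx₀K
  -- y₀ is in the open set X
  have hy₀X : y₀ ∈ X := by
    have hcl : y₀ ∈ X ∪ frontier X := by
      rw [← closure_eq_self_union_frontier]; exact hy₀K
    rcases hcl with h | h
    · exact h
    · exfalso
      have hv1 : 1 ≤ v y₀ := h3 y₀ h
      have huq : u q ≤ u y₀ := hqmin hy₀K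
      have hup : u x₀ ≤ u p := hpmax hx₀K
      have : u q + t * 1 ≤ u p + t * m₀ := by
        have h5 : u q + t * 1 ≤ φ y₀ := by
          simp only [hφ]
          have := mul_le_mul_of_nonneg_left hv1 (le_of_lt htpos)
          linarith
        linarith
      nlinarith
  -- eventual C² near y₀
  have hUy₀ : U ∈ 𝓝 y₀ := hU.mem_nhds (hclXU hy₀K)
  have huev : ∀ᶠ y in 𝓝 y₀, ContDiffAt ℝ 2 u y := by
    filter_upwards [hUy₀] with y hy
    exact hu.contDiffAt (hU.mem_nhds hy)
  have hvev : ∀ᶠ y in 𝓝 y₀, ContDiffAt ℝ 2 v y := by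
    filter_upwards [hUy₀] with y hy
    exact hv.contDiffAt (hU.mem_nhds hy)
  have hφev : ∀ᶠ y in 𝓝 y₀, ContDiffAt ℝ 2 φ y := by
    filter_upwards [huev, hvev] with y hy1 hy2
    exact hy1.add (contDiffAt_const.mul hy2)
  have hlocmin : IsLocalMin φ y₀ :=
    hy₀min.isLocalMin (Filter.mem_of_superset (hXopen.mem_nhds hy₀X) subset_closure)
  have hgen0 : 0 ≤ generatorA b σ φ y₀ := gen_nonneg b σ hφev hlocmin
  have hlin : generatorA b σ φ y₀ = generatorA b σ u y₀ + t * generatorA b σ v y₀ :=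
    gen_linear b σ t huev hvev
  have hvy₀ : 0 ≤ v y₀ := by
    have hg1 := h1 y₀ hy₀X
    have hg2 := h2 y₀ hy₀X
    nlinarith
  -- contradiction from the minimality of φ
  have h6 : u q + t * v y₀ ≤ u p + t * m₀ := by
    have h7 : u q ≤ u y₀ := hqmin hy₀K
    have h8 : u x₀ ≤ u p := hpmax hx₀K
    have : φ y₀ = u y₀ + t * v y₀ := rfl
    linarith
  nlinarith [mul_le_mul_of_nonneg_left hvy₀ (le_of_lt htpos)]
end
end
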